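/- arXiv:2302.07211 — 3 statements merged into one kernel-verified Lean document; each statement's English description precedes it below -/
import Mathlib

section
/- For every ε > 0 there exist constants c > 0 (absolute) and C > 0 (depending only on ε) such that the following holds. Let p ≥ 1 be an integer, G a finite abelian group, and A ⊆ G nonempty with density α. If ‖μ_A ∘ μ_A‖_p ≥ 1 + ε and S = {x ∈ G : μ_A ∘ μ_A(x) > 1 + ε/2}, then there exist nonempty A₁, A₂ ⊆ G, each of density at least c·α^{p + C}, such that ⟨μ_{A₁} ∘ μ_{A₂}, 1_S⟩ ≥ 1 − ε/8. -/
open scoped Classical Pointwise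

noncomputable section

variable {G : Type*} [AddCommGroup G] [Fintype G]

/-- The average `𝔼_{x ∈ G} f(x)`. -/
def gavg (f : G → ℝ) : ℝ := (∑ x, f x) / (Fintype.card G : ℝ)

/-- The inner product `⟨f, g⟩ = 𝔼_{x ∈ G} f(x) g(x)`. -/
def ginner (f g : G → ℝ) : ℝ := gavg (fun x => f x * g x)

/-- The convolution `f ∗ g (x) = 𝔼_y f(y) g(x - y)`. -/
def gconv (f g : G → ℝ) : G → ℝ := fun x => gavg (fun y => f y * g (x - y))

/-- The difference convolution `f ∘ g (x) = 𝔼_y f(y) g(x + y)`. -/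
def gdconv (f g : G → ℝ) : G → ℝ := fun x => gavg (fun y => f y * g (x + y))

/-- The `L^p(ν)` norm `(𝔼_x ν(x) |f(x)|^p)^(1/p)`. -/
def gnorm (p : ℝ) (ν : G → ℝ) (f : G → ℝ) : ℝ := (gavg fun x => ν x * |f x| ^ p) ^ (1 / p)

/-- The `L^∞` norm `max_x |f(x)|`. -/
def gsup (f : G → ℝ) : ℝ := ⨆ x, |f x|

/-- The normalised indicator `μ_A = (|G|/|A|) · 1_A`. -/
def gmu (A : Finset G) : G → ℝ := fun x => if x ∈ A then (Fintype.card G : ℝ) / (A.card : ℝ) else 0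

/-- The indicator function `1_A`. -/
def gind (A : Finset G) : G → ℝ := fun x => if x ∈ A then 1 else 0

/-- The density `|A|/|G|` of `A` in `G`. -/
def gdens (A : Finset G) : ℝ := (A.card : ℝ) / (Fintype.card G : ℝ)

/-- The relative density `μ_B(A) = |A ∩ B| / |B|`. -/
def grel (B A : Finset G) : ℝ := ((A ∩ B).card : ℝ) / (B.card : ℝ)

/-- `f` has nonnegative (real) Fourier transform: for every character `γ` of `G`,
`f̂(γ) = 𝔼_x f(x) γ(-x)` is a nonnegative real number. -/
def FourierNonneg (f : G → ℝ) : Prop :=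
  ∀ γ : AddChar G ℂ, ∃ r : ℝ, 0 ≤ r ∧
    (∑ x, (f x : ℂ) * γ (-x)) / (Fintype.card G : ℂ) = (r : ℂ)

/-- A Bohr set, given by a frequency set of characters together with a width function. -/
structure BohrSet (H : Type*) [AddCommGroup H] where
  freq : Finset (AddChar H ℂ)
  width : AddChar H ℂ → ℝ

namespace BohrSet

variable {H : Type*} [AddCommGroup H]

/-- The rank of a Bohr set: the size of its frequency set. -/
def rank (B : BohrSet H) : ℕ := B.freq.card

/-- The dilate `B_ρ` of a Bohr set: the width is dilated by `ρ`. -/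
def dilate (B : BohrSet H) (ρ : ℝ) : BohrSet H := ⟨B.freq, fun γ => ρ * B.width γ⟩

/-- The underlying set `{x : |1 - γ(x)| ≤ ν(γ) ∀ γ ∈ Γ}` of a Bohr set. -/
def toFinset [Fintype H] (B : BohrSet H) : Finset H :=
  Finset.univ.filter fun x => ∀ γ ∈ B.freq, ‖1 - γ x‖ ≤ B.width γ

/-- A Bohr set of rank `d` is regular if `(1 - 100d|κ|)|B| ≤ |B_{1+κ}| ≤ (1 + 100d|κ|)|B|`
for all `|κ| ≤ 1/(100d)`. -/
def IsRegular [Fintype H] (B : BohrSet H) : Prop :=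
  ∀ κ : ℝ, |κ| ≤ 1 / (100 * B.rank) →
    (1 - 100 * B.rank * |κ|) * (B.toFinset.card : ℝ) ≤ ((B.dilate (1 + κ)).toFinset.card : ℝ) ∧
    ((B.dilate (1 + κ)).toFinset.card : ℝ) ≤ (1 + 100 * B.rank * |κ|) * (B.toFinset.card : ℝ)

end BohrSet

/-- The dilate `k·B = {kb : b ∈ B}` of a finite set. -/
def kdil (k : ℕ) (B : Finset G) : Finset G := B.image fun x => k • x

set_option linter.unusedSectionVars false
set_option linter.unusedVariables false
set_option maxHeartbeats 1000000

namespace DRC9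
open Finset

lemma cardG_pos : (0:ℝ) < (Fintype.card G : ℝ) := by exact_mod_cast Fintype.card_pos

lemma sum_addLeft (h : G → ℝ) (a : G) : ∑ t, h (a + t) = ∑ t, h t :=
  Fintype.sum_equiv (Equiv.addLeft a) _ _ (fun _ => rfl)

lemma gind_nonneg (A : Finset G) (x : G) : 0 ≤ gind A x := by
  unfold gind; split <;> norm_num

lemma gind_le_one (A : Finset G) (x : G) : gind A x ≤ 1 := by
  unfold gind; split <;> norm_num

lemma sum_gind (A : Finset G) : ∑ x, gind A x = (A.card : ℝ) := by
  simp [gind, Finset.sum_boole, Finset.filter_univ_mem]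

lemma gmu_eq (B : Finset G) (x : G) :
    gmu B x = (Fintype.card G : ℝ) / (B.card : ℝ) * gind B x := by
  unfold gmu gind; split <;> simp

lemma gmu_nonneg (B : Finset G) (x : G) : 0 ≤ gmu B x := by
  unfold gmu; split <;> positivity

lemma gdconv_nonneg (A B : Finset G) (x : G) : 0 ≤ gdconv (gmu A) (gmu B) x := by
  unfold gdconv gavg
  apply div_nonneg _ (Nat.cast_nonneg _)
  exact Finset.sum_nonneg fun y _ => mul_nonneg (gmu_nonneg _ _) (gmu_nonneg _ _)

def cR (A : Finset G) (x : G) : ℝ := ∑ t, gind A t * gind A (t + x)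

lemma cR_nonneg (A : Finset G) (x : G) : 0 ≤ cR A x :=
  Finset.sum_nonneg fun t _ => mul_nonneg (gind_nonneg _ _) (gind_nonneg _ _)

lemma gdconv_gmu_eq (A : Finset G) (hA : A.Nonempty) (x : G) :
    gdconv (gmu A) (gmu A) x
      = (Fintype.card G : ℝ) / ((A.card : ℝ) * (A.card : ℝ)) * cR A x := by
  have hn : ((A.card : ℝ)) ≠ 0 := Nat.cast_ne_zero.mpr (Finset.card_pos.mpr hA).ne'
  have hN : ((Fintype.card G : ℝ)) ≠ 0 := (cardG_pos (G := G)).ne'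
  unfold gdconv gavg cR
  rw [Finset.mul_sum, Finset.sum_div]
  apply Finset.sum_congr rfl
  intro y _
  rw [gmu_eq, gmu_eq, add_comm x y]
  field_simp

-- the sets B(y)
def By (A : Finset G) {q : ℕ} (y : Fin q → G) : Finset G :=
  Finset.univ.filter fun u => ∀ i, u + y i ∈ A

lemma prod_gind_eq (A : Finset G) {q : ℕ} (y : Fin q → G) (u : G) :
    ∏ i, gind A (u + y i) = gind (By A y) u := by
  unfold gind By
  by_cases h : ∀ i, u + y i ∈ A
  · rw [Finset.prod_eq_one (fun i _ => by rw [if_pos (h i)])]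
    simp [h]
  · obtain ⟨i, hi⟩ := not_forall.mp h
    rw [Finset.prod_eq_zero (Finset.mem_univ i) (by rw [if_neg hi])]
    simp [h]

-- master counting identity
lemma master (A : Finset G) (q : ℕ) (g : G → ℝ) :
    ∑ y : Fin q → G, ∑ u, ∑ v,
        gind (By A y) u * gind (By A y) v * g (v - u)
      = (Fintype.card G : ℝ) * ∑ x, cR A x ^ q * g x := by
  have key : ∀ u v : G,
      ∑ y : Fin q → G, (∏ i, gind A (u + y i)) * (∏ i, gind A (v + y i))
        = cR A (v - u) ^ q := by
    intro u v
    calc ∑ y : Fin q → G, (∏ i, gind A (u + y i)) * (∏ i, gind A (v + y i))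
        = ∑ y : Fin q → G, ∏ i, gind A (u + y i) * gind A (v + y i) := by
          apply Finset.sum_congr rfl; intro y _; exact Finset.prod_mul_distrib.symm
      _ = (∑ t, gind A (u + t) * gind A (v + t)) ^ q :=
          (Fintype.sum_pow (fun t => gind A (u + t) * gind A (v + t)) q).symm
      _ = cR A (v - u) ^ q := by
          congr 1
          calc ∑ t, gind A (u + t) * gind A (v + t)
              = ∑ t, (fun s => gind A s * gind A (s + (v - u))) (u + t) := by
                apply Finset.sum_congr rfl; intro t _
                simp only
                congr 2
                abel
            _ = ∑ s, gind A s * gind A (s + (v - u)) := by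
                exact sum_addLeft (fun s => gind A s * gind A (s + (v - u))) u
  calc ∑ y : Fin q → G, ∑ u, ∑ v, gind (By A y) u * gind (By A y) v * g (v - u)
      = ∑ u, ∑ y : Fin q → G, ∑ v, gind (By A y) u * gind (By A y) v * g (v - u) :=
        Finset.sum_comm
    _ = ∑ u, ∑ v, ∑ y : Fin q → G, gind (By A y) u * gind (By A y) v * g (v - u) := by
        apply Finset.sum_congr rfl; intro u _; exact Finset.sum_comm
    _ = ∑ u, ∑ v, cR A (v - u) ^ q * g (v - u) := by
        apply Finset.sum_congr rfl; intro u _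
        apply Finset.sum_congr rfl; intro v _
        rw [← Finset.sum_mul]
        congr 1
        rw [← key u v]
        apply Finset.sum_congr rfl; intro y _
        rw [prod_gind_eq, prod_gind_eq]
    _ = ∑ u : G, ∑ x, cR A x ^ q * g x := by
        apply Finset.sum_congr rfl; intro u _
        exact Fintype.sum_equiv (Equiv.subRight u) _ _ (fun v => rfl)
    _ = (Fintype.card G : ℝ) * ∑ x, cR A x ^ q * g x := by
        rw [Finset.sum_const, card_univ, nsmul_eq_mul]

lemma master1 (A : Finset G) (q : ℕ) :
    ∑ y : Fin q → G, ∑ u, gind (By A y) u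
      = (Fintype.card G : ℝ) * (A.card : ℝ) ^ q := by
  calc ∑ y : Fin q → G, ∑ u, gind (By A y) u
      = ∑ u, ∑ y : Fin q → G, ∏ i, gind A (u + y i) := by
        rw [Finset.sum_comm]
        apply Finset.sum_congr rfl; intro u _
        apply Finset.sum_congr rfl; intro y _
        rw [prod_gind_eq]
    _ = ∑ u : G, ((A.card : ℝ)) ^ q := by
        apply Finset.sum_congr rfl; intro u _
        calc ∑ y : Fin q → G, ∏ i, gind A (u + y i)
            = (∑ t, gind A (u + t)) ^ q := (Fintype.sum_pow (fun t => gind A (u + t)) q).symm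
          _ = ((A.card : ℝ)) ^ q := by rw [sum_addLeft (fun s => gind A s) u, sum_gind]
    _ = (Fintype.card G : ℝ) * (A.card : ℝ) ^ q := by
        rw [Finset.sum_const, card_univ, nsmul_eq_mul]

lemma ginner_eq (B S : Finset G) (hB : B.Nonempty) :
    ginner (gdconv (gmu B) (gmu B)) (gind S)
      = (∑ u, ∑ v, gind B u * gind B v * gind S (v - u)) / ((B.card : ℝ) * (B.card : ℝ)) := by
  have hM : ((B.card : ℝ)) ≠ 0 := Nat.cast_ne_zero.mpr (Finset.card_pos.mpr hB).ne'
  have hN : ((Fintype.card G : ℝ)) ≠ 0 := (cardG_pos (G := G)).ne'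
  unfold ginner gavg gdconv gavg
  rw [Finset.sum_div]
  have hterm : ∀ x, (∑ w, gmu B w * gmu B (x + w)) / (Fintype.card G : ℝ) * gind S x
      / (Fintype.card G : ℝ)
      = (∑ w, gind B w * gind B (x + w) * gind S x) / ((B.card : ℝ) * (B.card : ℝ)) := by
    intro x
    rw [div_mul_eq_mul_div, div_div, Finset.sum_mul, Finset.sum_div, Finset.sum_div]
    apply Finset.sum_congr rfl; intro w _
    rw [gmu_eq, gmu_eq]
    field_simp
  simp_rw [hterm]
  rw [← Finset.sum_div]
  congr 1
  rw [Finset.sum_comm]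
  apply Finset.sum_congr rfl; intro w _
  exact Fintype.sum_equiv (Equiv.addRight w) _ _
    (fun x => by simp only [Equiv.coe_addRight, add_sub_cancel_right])


lemma core (A : Finset G) (hA : A.Nonempty) (ε : ℝ) (hε : 0 < ε) (q : ℕ) (hq : 1 ≤ q)
    (hmom : (Fintype.card G : ℝ) * (1 + ε) ^ q ≤ ∑ x, gdconv (gmu A) (gmu A) x ^ q)
    (hrq : 32 * (1 + ε / 2) ^ q ≤ ε * (1 + ε) ^ q) :
    ∃ B : Finset G, B.Nonempty ∧ gdens A ^ q / 2 ≤ gdens B ∧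
      1 - ε / 8 ≤ ginner (gdconv (gmu B) (gmu B))
        (gind (Finset.univ.filter fun x => 1 + ε / 2 < gdconv (gmu A) (gmu A) x)) := by
  set N : ℝ := (Fintype.card G : ℝ) with hNdef
  set n : ℝ := (A.card : ℝ) with hndef
  have hN : 0 < N := cardG_pos
  have hn : 0 < n := by
    rw [hndef]; exact_mod_cast Finset.card_pos.mpr hA
  set S : Finset G := Finset.univ.filter fun x => 1 + ε / 2 < gdconv (gmu A) (gmu A) x with hSdef
  set M : (Fin q → G) → ℝ := fun y => ((By A y).card : ℝ) with hMdef
  set Bad : (Fin q → G) → ℝ := fun y =>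
    ∑ u, ∑ v, gind (By A y) u * gind (By A y) v * (1 - gind S (v - u)) with hBaddef
  have hM0 : ∀ y, 0 ≤ M y := fun y => Nat.cast_nonneg _
  have hBad0 : ∀ y, 0 ≤ Bad y := by
    intro y
    apply Finset.sum_nonneg; intro u _
    apply Finset.sum_nonneg; intro v _
    have h1 := gind_le_one S (v - u)
    have h2 := gind_nonneg (By A y) u
    have h3 := gind_nonneg (By A y) v
    exact mul_nonneg (mul_nonneg h2 h3) (by linarith)
  have hMsq : ∀ y : Fin q → G, ∑ u, ∑ v, gind (By A y) u * gind (By A y) v = M y * M y := by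
    intro y
    rw [← Finset.sum_mul_sum, sum_gind]
  have E1 : ∑ y : Fin q → G, M y * M y = N * ∑ x, cR A x ^ q := by
    have hh := master A q (fun _ => 1)
    simp only [mul_one] at hh
    calc ∑ y : Fin q → G, M y * M y
        = ∑ y : Fin q → G, ∑ u, ∑ v, gind (By A y) u * gind (By A y) v := by
          apply Finset.sum_congr rfl; intro y _; exact (hMsq y).symm
      _ = N * ∑ x, cR A x ^ q := hh
  have E2 : ∑ y : Fin q → G, Bad y = N * ∑ x, cR A x ^ q * (1 - gind S x) :=
    master A q (fun x => 1 - gind S x)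
  have E3 : ∑ y : Fin q → G, M y = N * n ^ q := by
    calc ∑ y : Fin q → G, M y = ∑ y : Fin q → G, ∑ u, gind (By A y) u := by
          apply Finset.sum_congr rfl; intro y _; exact (sum_gind (By A y)).symm
      _ = N * n ^ q := master1 A q
  have hcRf : ∀ x, cR A x = n * n / N * gdconv (gmu A) (gmu A) x := by
    intro x
    rw [gdconv_gmu_eq A hA x]
    rw [hndef, hNdef]
    field_simp
  have hf0 : ∀ x, 0 ≤ gdconv (gmu A) (gmu A) x := gdconv_nonneg A A
  set R : ℝ := ∑ x, cR A x ^ q with hRdef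
  have hR0 : 0 ≤ R := Finset.sum_nonneg fun x _ => pow_nonneg (cR_nonneg A x) q
  have hRlow : (n * n / N) ^ q * (N * (1 + ε) ^ q) ≤ R := by
    have hh : R = (n * n / N) ^ q * ∑ x, gdconv (gmu A) (gmu A) x ^ q := by
      rw [hRdef, Finset.mul_sum]
      apply Finset.sum_congr rfl; intro x _
      rw [hcRf x, mul_pow]
    rw [hh]
    apply mul_le_mul_of_nonneg_left hmom (by positivity)
  have hBadsum : ∑ y : Fin q → G, Bad y ≤ N * ((n * n / N) ^ q * (N * (1 + ε / 2) ^ q)) := by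
    rw [E2]
    apply mul_le_mul_of_nonneg_left _ hN.le
    calc ∑ x, cR A x ^ q * (1 - gind S x)
        ≤ ∑ _x : G, (n * n / N) ^ q * (1 + ε / 2) ^ q := by
          apply Finset.sum_le_sum; intro x _
          by_cases hx : x ∈ S
          · have hh : gind S x = 1 := by unfold gind; rw [if_pos hx]
            rw [hh]
            simp only [sub_self, mul_zero]
            positivity
          · have h1 : gind S x = 0 := by unfold gind; rw [if_neg hx]
            rw [h1]
            simp only [sub_zero, mul_one]
            have hxS : gdconv (gmu A) (gmu A) x ≤ 1 + ε / 2 := by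
              by_contra hcon
              exact hx (Finset.mem_filter.mpr ⟨Finset.mem_univ x, lt_of_not_ge hcon⟩)
            rw [hcRf x, mul_pow]
            apply mul_le_mul_of_nonneg_left _ (by positivity)
            exact pow_le_pow_left₀ (hf0 x) hxS q
      _ = (n * n / N) ^ q * (N * (1 + ε / 2) ^ q) := by
          rw [Finset.sum_const, card_univ, nsmul_eq_mul]; ring
  set T : ℝ := ∑ y : Fin q → G, M y * M y with hTdef
  set T₀ : ℝ := (n * n / N) ^ q * (N * (1 + ε) ^ q) with hT0def
  have hT0pos : 0 < T₀ := by positivity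
  have hTlowN : N * T₀ ≤ T := by
    rw [E1]
    exact mul_le_mul_of_nonneg_left hRlow hN.le
  have hTpos : 0 < T := lt_of_lt_of_le (by positivity) hTlowN
  set K : ℝ := T / (2 * (N * n ^ q)) with hKdef
  have hKpos : 0 < K := div_pos hTpos (by positivity)
  by_cases hex : ∃ y : Fin q → G, K ≤ M y ∧ Bad y ≤ ε / 8 * (M y * M y)
  · obtain ⟨y, hKy, hBady⟩ := hex
    have hBpos : 0 < M y := lt_of_lt_of_le hKpos hKy
    have hBne : (By A y).Nonempty := by
      have hBpos' : (0:ℝ) < ((By A y).card : ℝ) := hBpos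
      exact Finset.card_pos.mp (by exact_mod_cast hBpos')
    refine ⟨By A y, hBne, ?_, ?_⟩
    · -- density bound
      have hre : N * T₀ / (2 * (N * n ^ q)) / N = (n / N) ^ q * (1 + ε) ^ q / 2 := by
        rw [hT0def]
        field_simp
        ring
      have h6 : gdens A ^ q / 2 ≤ N * T₀ / (2 * (N * n ^ q)) / N := by
        rw [hre]
        unfold gdens
        rw [← hndef, ← hNdef]
        have h7 : (1:ℝ) ≤ (1 + ε) ^ q := one_le_pow₀ (by linarith : (1:ℝ) ≤ 1 + ε)
        have h8 : (0:ℝ) ≤ (n / N) ^ q := by positivity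
        nlinarith
      have h9 : N * T₀ / (2 * (N * n ^ q)) ≤ K := by
        rw [hKdef]
        exact (div_le_div_iff_of_pos_right (by positivity)).mpr hTlowN
      have h10 : K / N ≤ M y / N := (div_le_div_iff_of_pos_right hN).mpr hKy
      have h11 : N * T₀ / (2 * (N * n ^ q)) / N ≤ K / N := (div_le_div_iff_of_pos_right hN).mpr h9
      have hgd : gdens (By A y) = M y / N := rfl
      rw [hgd]
      linarith
    · -- inner product bound
      rw [ginner_eq (By A y) S hBne]
      have hGood : ∑ u, ∑ v, gind (By A y) u * gind (By A y) v * gind S (v - u)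
          = M y * M y - Bad y := by
        rw [← hMsq y, hBaddef]
        simp only
        have hh : ∀ u : G, ∀ v : G, gind (By A y) u * gind (By A y) v * gind S (v - u)
            = gind (By A y) u * gind (By A y) v
              - gind (By A y) u * gind (By A y) v * (1 - gind S (v - u)) := by
          intro u v; ring
        simp_rw [hh, Finset.sum_sub_distrib]
      have hcpos : (0:ℝ) < ((By A y).card : ℝ) := by exact_mod_cast Finset.card_pos.mpr hBne
      have hMc : (((By A y).card : ℕ) : ℝ) = M y := rfl
      rw [hGood, hMc]
      rw [le_div_iff₀ (by nlinarith : (0:ℝ) < M y * M y)]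
      nlinarith
  · exfalso
    push_neg at hex
    have hpt : ∀ y : Fin q → G, M y * M y ≤ K * M y + 8 / ε * Bad y := by
      intro y
      by_cases hK : K ≤ M y
      · have h2 := hex y hK
        have h3 : 8 / ε * (ε / 8 * (M y * M y)) = M y * M y := by field_simp
        have h4 : 8 / ε * (ε / 8 * (M y * M y)) ≤ 8 / ε * Bad y :=
          mul_le_mul_of_nonneg_left h2.le (by positivity)
        rw [h3] at h4
        nlinarith [mul_nonneg hKpos.le (hM0 y)]
      · push_neg at hK
        have h5 : M y * M y ≤ K * M y := mul_le_mul_of_nonneg_right hK.le (hM0 y)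
        have h6 : 0 ≤ 8 / ε * Bad y := mul_nonneg (by positivity) (hBad0 y)
        linarith
    have hsum : T ≤ K * (N * n ^ q) + 8 / ε * ∑ y : Fin q → G, Bad y := by
      rw [← E3, Finset.mul_sum, Finset.mul_sum, ← Finset.sum_add_distrib]
      exact Finset.sum_le_sum fun y _ => hpt y
    have hKM : K * (N * n ^ q) = T / 2 := by
      rw [hKdef]
      field_simp
    have h6 : 8 / ε * (1 + ε / 2) ^ q ≤ 1 / 4 * (1 + ε) ^ q := by
      rw [div_mul_eq_mul_div, div_le_iff₀ hε]
      nlinarith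
    have hBadfinal : 8 / ε * ∑ y : Fin q → G, Bad y ≤ T / 4 := by
      calc 8 / ε * ∑ y : Fin q → G, Bad y
          ≤ 8 / ε * (N * ((n * n / N) ^ q * (N * (1 + ε / 2) ^ q))) :=
            mul_le_mul_of_nonneg_left hBadsum (by positivity)
        _ = (N * (n * n / N) ^ q * N) * (8 / ε * (1 + ε / 2) ^ q) := by ring
        _ ≤ (N * (n * n / N) ^ q * N) * (1 / 4 * (1 + ε) ^ q) :=
            mul_le_mul_of_nonneg_left h6 (by positivity)
        _ = N * T₀ / 4 := by rw [hT0def]; ring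
        _ ≤ T / 4 := by linarith
    linarith

end DRC9

/-- **Dependent random choice, special case.** There is an absolute `c > 0` and, for every
`ε > 0`, a constant `C > 0` such that: for any `p ≥ 1`, any finite abelian group `G` and
nonempty `A ⊆ G` of density `α` with `‖μ_A ∘ μ_A‖_p ≥ 1 + ε`, setting
`S = {x : μ_A ∘ μ_A(x) > 1 + ε/2}`, there are nonempty `A₁, A₂ ⊆ G`, each of density at least
`c·α^{p+C}`, with `⟨μ_{A₁} ∘ μ_{A₂}, 1_S⟩ ≥ 1 - ε/8`. -/
theorem statement9 :
    ∃ c > (0 : ℝ), ∀ ε : ℝ, 0 < ε → ∃ C > (0 : ℝ), ∀ p : ℕ, 1 ≤ p →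
      ∀ (G : Type) [AddCommGroup G] [Fintype G],
      ∀ A : Finset G, A.Nonempty →
      1 + ε ≤ gnorm (p : ℝ) (fun _ => 1) (gdconv (gmu A) (gmu A)) →
      ∃ A₁ A₂ : Finset G, A₁.Nonempty ∧ A₂.Nonempty ∧
        c * gdens A ^ ((p : ℝ) + C) ≤ gdens A₁ ∧
        c * gdens A ^ ((p : ℝ) + C) ≤ gdens A₂ ∧
        1 - ε / 8 ≤ ginner (gdconv (gmu A₁) (gmu A₂))
          (gind (Finset.univ.filter fun x => 1 + ε / 2 < gdconv (gmu A) (gmu A) x)) := by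
  refine ⟨1/2, by norm_num, ?_⟩
  intro ε hε
  have hr1 : (1 + ε/2)/(1+ε) < 1 := by
    rw [div_lt_one (by linarith)]; linarith
  have hr0 : 0 < (1 + ε/2)/(1+ε) := by positivity
  obtain ⟨m0, hm0⟩ := exists_pow_lt_of_lt_one (show (0:ℝ) < ε/32 by positivity) hr1
  set m : ℕ := m0 + 1 with hmdef
  have hm : ((1 + ε/2)/(1+ε)) ^ m < ε/32 := by
    calc ((1+ε/2)/(1+ε))^m ≤ ((1+ε/2)/(1+ε))^m0 :=
          pow_le_pow_of_le_one hr0.le hr1.le (by omega)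
      _ < ε/32 := hm0
  have hmpos : (0:ℝ) < (m:ℝ) := by exact_mod_cast Nat.succ_pos m0
  refine ⟨(m:ℝ) * (m:ℝ), by nlinarith, ?_⟩
  intro p hp G _ _ A hA hnorm
  have hf0 : ∀ x, 0 ≤ gdconv (gmu A) (gmu A) x := DRC9.gdconv_nonneg A A
  have hN : (0:ℝ) < (Fintype.card G : ℝ) := DRC9.cardG_pos
  -- moment at p
  have hmomp : (Fintype.card G : ℝ) * (1+ε)^p ≤ ∑ x, gdconv (gmu A) (gmu A) x ^ p := by
    have hXeq : (gavg fun x => (1:ℝ) * |gdconv (gmu A) (gmu A) x| ^ (p:ℝ))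
        = (∑ x, gdconv (gmu A) (gmu A) x ^ p)/(Fintype.card G : ℝ) := by
      unfold gavg; congr 1; apply Finset.sum_congr rfl; intro x _
      show (1:ℝ) * |gdconv (gmu A) (gmu A) x| ^ ((p:ℕ):ℝ) = gdconv (gmu A) (gmu A) x ^ p
      rw [one_mul, abs_of_nonneg (hf0 x), Real.rpow_natCast]
    have h0 : (0:ℝ) ≤ (∑ x, gdconv (gmu A) (gmu A) x ^ p)/(Fintype.card G:ℝ) :=
      div_nonneg (Finset.sum_nonneg fun x _ => pow_nonneg (hf0 x) p) hN.le
    unfold gnorm at hnorm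
    rw [hXeq] at hnorm
    have hp0 : ((p:ℝ)) ≠ 0 := Nat.cast_ne_zero.mpr (by omega)
    have h2 := Real.rpow_le_rpow (by linarith : (0:ℝ) ≤ 1+ε) hnorm (Nat.cast_nonneg p)
    rw [← Real.rpow_mul h0, one_div_mul_cancel hp0, Real.rpow_one, Real.rpow_natCast] at h2
    have h3 := (le_div_iff₀ hN).mp h2
    linarith
  -- choice of q
  set k : ℕ := if p < m then m else 1 with hkdef
  have hk1 : 1 ≤ k := by rw [hkdef]; split <;> omega
  set q : ℕ := p * k with hqdef
  have hq1 : 1 ≤ q := by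
    calc 1 = 1 * 1 := rfl
      _ ≤ p * k := Nat.mul_le_mul hp hk1
  have hqm : m ≤ q := by
    rw [hqdef, hkdef]; split
    · calc m = 1 * m := (one_mul m).symm
        _ ≤ p * m := Nat.mul_le_mul_right m hp
    · next h =>
        push_neg at h
        simpa using h
  have hqpm : q ≤ p + m * m := by
    rw [hqdef, hkdef]; split
    · next h =>
        calc p * m ≤ m * m := Nat.mul_le_mul_right m (le_of_lt h)
          _ ≤ p + m * m := Nat.le_add_left _ _
    · simpa using Nat.le_add_right p (m*m)
  -- moment at q via Jensen
  obtain ⟨k', hk'⟩ : ∃ k', k = k' + 1 := ⟨k - 1, by omega⟩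
  have hmomq : (Fintype.card G : ℝ) * (1+ε)^q ≤ ∑ x, gdconv (gmu A) (gmu A) x ^ q := by
    have hJ := pow_sum_div_card_le_sum_pow (s := Finset.univ)
      (f := fun x => gdconv (gmu A) (gmu A) x ^ p)
      (fun i _ => pow_nonneg (hf0 i) p) k'
    rw [Finset.card_univ] at hJ
    have hstep : ((Fintype.card G : ℝ) * (1+ε)^p)^(k'+1) / (Fintype.card G:ℝ)^k'
        ≤ (∑ x, gdconv (gmu A) (gmu A) x ^ p)^(k'+1) / (Fintype.card G:ℝ)^k' :=
      (div_le_div_iff_of_pos_right (by positivity)).mpr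
        (pow_le_pow_left₀ (by positivity) hmomp (k'+1))
    have hval : ((Fintype.card G : ℝ) * (1+ε)^p)^(k'+1) / (Fintype.card G:ℝ)^k'
        = (Fintype.card G:ℝ) * (1+ε)^q := by
      rw [hqdef, hk', mul_pow, ← pow_mul]
      field_simp
      ring
    have hsum : ∑ x, (gdconv (gmu A) (gmu A) x ^ p) ^ (k'+1)
        = ∑ x, gdconv (gmu A) (gmu A) x ^ q := by
      apply Finset.sum_congr rfl; intro x _
      rw [hqdef, hk', pow_mul]
    calc (Fintype.card G : ℝ) * (1+ε)^q
        = ((Fintype.card G : ℝ) * (1+ε)^p)^(k'+1) / (Fintype.card G:ℝ)^k' := hval.symm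
      _ ≤ (∑ x, gdconv (gmu A) (gmu A) x ^ p)^(k'+1) / (Fintype.card G:ℝ)^k' := hstep
      _ ≤ ∑ x, (gdconv (gmu A) (gmu A) x ^ p) ^ (k'+1) := hJ
      _ = ∑ x, gdconv (gmu A) (gmu A) x ^ q := hsum
  -- ratio bound at q
  have hrq : 32 * (1 + ε/2)^q ≤ ε * (1+ε)^q := by
    have h1 : ((1+ε/2)/(1+ε))^q ≤ ((1+ε/2)/(1+ε))^m :=
      pow_le_pow_of_le_one hr0.le hr1.le hqm
    have h2 : ((1+ε/2)/(1+ε))^q < ε/32 := lt_of_le_of_lt h1 hm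
    have h3 : (0:ℝ) < (1+ε)^q := by positivity
    rw [div_pow, div_lt_iff₀ h3] at h2
    nlinarith
  obtain ⟨B, hBne, hBd, hBi⟩ := DRC9.core A hA ε hε q hq1 hmomq hrq
  have hα0 : 0 < gdens A := div_pos (by exact_mod_cast Finset.card_pos.mpr hA) hN
  have hα1 : gdens A ≤ 1 := by
    unfold gdens
    rw [div_le_one hN]
    exact_mod_cast Finset.card_le_univ A
  have hcast : gdens A ^ ((p:ℝ) + (m:ℝ)*(m:ℝ)) = gdens A ^ (p + m*m : ℕ) := by
    rw [← Real.rpow_natCast (gdens A) (p + m*m)]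
    congr 1
    push_cast
    ring
  have hmono : gdens A ^ (p + m*m : ℕ) ≤ gdens A ^ q := pow_le_pow_of_le_one hα0.le hα1 hqpm
  have hdens : 1/2 * gdens A ^ ((p:ℝ) + (m:ℝ)*(m:ℝ)) ≤ gdens B := by
    rw [hcast]
    linarith
  exact ⟨B, B, hBne, hBne, hdens, hdens, hBi⟩
end
end

section
/- Let p ≥ 2 be an even integer, let G be a finite abelian group, let B₁, B₂ ⊆ G be nonempty, and let μ = μ_{B₁} ∘ μ_{B₂}. Let A ⊆ G be nonempty with density α and suppose ‖μ_A ∘ μ_A‖_{p(μ)} > 0, and let f : G → ℝ_{≥0}. Then there exist nonempty sets A₁ ⊆ B₁ and A₂ ⊆ B₂ such that ⟨μ_{A₁} ∘ μ_{A₂}, f⟩ ≤ 2·⟨(μ_A ∘ μ_A)^p, f⟩_μ / ‖μ_A ∘ μ_A‖_{p(μ)}^p and min(μ_{B₁}(A₁), μ_{B₂}(A₂)) ≥ (1/4)·α^{2p}·‖μ_A ∘ μ_A‖_{p(μ)}^{2p}. -/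
set_option linter.unusedSectionVars false
set_option linter.unusedVariables false
set_option maxHeartbeats 1000000


open scoped Classical Pointwise

noncomputable section

variable {G : Type*} [AddCommGroup G] [Fintype G]

def Sfil (A B : Finset G) {p : ℕ} (u : Fin p → G) : Finset G := B.filter fun y => ∀ i, y + u i ∈ A

lemma Sfil_subset (A B : Finset G) {p : ℕ} (u : Fin p → G) : Sfil A B u ⊆ B := Finset.filter_subset _ _

lemma gind_nonneg (A : Finset G) (x : G) : 0 ≤ gind A x := by
  unfold gind; split <;> norm_num

lemma gmu_nonneg (A : Finset G) (x : G) : 0 ≤ gmu A x := by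
  unfold gmu; split
  · positivity
  · exact le_rfl

lemma sum_gind (A : Finset G) : ∑ x, gind A x = A.card := by
  simp [gind]

lemma sum_gmu (B : Finset G) (hB : B.Nonempty) : ∑ x, gmu B x = (Fintype.card G : ℝ) := by
  have hb : (B.card : ℝ) ≠ 0 := Nat.cast_ne_zero.2 hB.card_pos.ne'
  simp only [gmu]
  rw [Finset.sum_ite_mem, Finset.univ_inter, Finset.sum_const, nsmul_eq_mul]
  field_simp

lemma sum_addRight (f : G → ℝ) (y : G) : ∑ x, f (x + y) = ∑ x, f x :=
  Fintype.sum_equiv (Equiv.addRight y) _ _ (fun x => rfl)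

lemma sum_pi_shift {p : ℕ} (F : (Fin p → G) → ℝ) (y : G) :
    ∑ t : Fin p → G, F t = ∑ u : Fin p → G, F (fun i => y + u i) :=
  (Fintype.sum_equiv (Equiv.piCongrRight fun _ => Equiv.addLeft y) _ _ (fun u => rfl)).symm

lemma sum_pow_eq (q : G → ℝ) (p : ℕ) :
    (∑ s, q s) ^ p = ∑ t : Fin p → G, ∏ i, q (t i) := by
  calc (∑ s, q s) ^ p = ∏ _i : Fin p, ∑ s, q s := by
        rw [Finset.prod_const, Finset.card_univ, Fintype.card_fin]
    _ = ∑ t ∈ Fintype.piFinset (fun _ => Finset.univ), ∏ i, q (t i) := Finset.prod_univ_sum _ _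
    _ = ∑ t : Fin p → G, ∏ i, q (t i) := by rw [Fintype.piFinset_univ]

lemma prod_gind (A : Finset G) {p : ℕ} (u : Fin p → G) (y : G) :
    (∏ i, gind A (y + u i)) = if ∀ i, y + u i ∈ A then (1:ℝ) else 0 := by
  by_cases h : ∀ i, y + u i ∈ A
  · rw [if_pos h]; exact Finset.prod_eq_one fun i _ => if_pos (h i)
  · rw [if_neg h]; push_neg at h; obtain ⟨i, hi⟩ := h
    exact Finset.prod_eq_zero (Finset.mem_univ i) (if_neg hi)

lemma mu_prod_gind (A B : Finset G) {p : ℕ} (u : Fin p → G) (y : G) :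
    gmu B y * ∏ i, gind A (y + u i) =
      ((Fintype.card G : ℝ) / B.card) * gind (Sfil A B u) y := by
  rw [prod_gind]
  simp only [gmu, gind, Sfil, Finset.mem_filter]
  by_cases hb : y ∈ B <;> by_cases hq : ∀ i, y + u i ∈ A <;>
    simp [hb, hq]



lemma key_identity (p : ℕ) (hp : 1 ≤ p) (B₁ B₂ A : Finset G)
    (hB₁ : B₁.Nonempty) (hB₂ : B₂.Nonempty) (h : G → ℝ) :
    ∑ u : Fin p → G, ∑ x, ∑ y, gind (Sfil A B₁ u) y * gind (Sfil A B₂ u) (x + y) * h x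
    = (B₁.card : ℝ) * B₂.card * (Fintype.card G : ℝ) ^ (p - 1) *
        ∑ x, gdconv (gmu B₁) (gmu B₂) x * gdconv (gind A) (gind A) x ^ p * h x := by
  have : Nonempty G := ⟨hB₁.choose⟩
  set N : ℝ := (Fintype.card G : ℝ) with hNdef
  have hN : 0 < N := by rw [hNdef]; exact_mod_cast Fintype.card_pos
  have hb₁ : (B₁.card : ℝ) ≠ 0 := Nat.cast_ne_zero.2 hB₁.card_pos.ne'
  have hb₂ : (B₂.card : ℝ) ≠ 0 := Nat.cast_ne_zero.2 hB₂.card_pos.ne'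
  have hx : ∀ x, gdconv (gmu B₁) (gmu B₂) x * gdconv (gind A) (gind A) x ^ p * h x
      = (N ^ (p + 1))⁻¹ * ((N / B₁.card) * (N / B₂.card)) *
          ((∑ y, ∑ u : Fin p → G, gind (Sfil A B₁ u) y * gind (Sfil A B₂ u) (x + y)) * h x) := by
    intro x
    have e2 : gdconv (gind A) (gind A) x ^ p
        = (∑ t : Fin p → G, ∏ i, (gind A (t i) * gind A (x + t i))) / N ^ p := by
      show ((∑ s, gind A s * gind A (x + s)) / N) ^ p = _
      rw [div_pow, sum_pow_eq]
    have e3 : (∑ y, gmu B₁ y * gmu B₂ (x + y)) *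
          (∑ t : Fin p → G, ∏ i, (gind A (t i) * gind A (x + t i)))
        = (N / B₁.card) * (N / B₂.card) *
          ∑ y, ∑ u : Fin p → G, gind (Sfil A B₁ u) y * gind (Sfil A B₂ u) (x + y) := by
      rw [Finset.sum_mul_sum, Finset.mul_sum]
      refine Finset.sum_congr rfl fun y _ => ?_
      rw [sum_pi_shift (fun t => gmu B₁ y * gmu B₂ (x + y) *
            ∏ i, (gind A (t i) * gind A (x + t i))) y]
      rw [Finset.mul_sum]
      refine Finset.sum_congr rfl fun u _ => ?_
      have e4 : (∏ i, (gind A (y + u i) * gind A (x + (y + u i))))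
          = (∏ i, gind A (y + u i)) * ∏ i, gind A ((x + y) + u i) := by
        rw [Finset.prod_mul_distrib]
        congr 1
        exact Finset.prod_congr rfl fun i _ => by rw [add_assoc]
      calc gmu B₁ y * gmu B₂ (x + y) * ∏ i, (gind A (y + u i) * gind A (x + (y + u i)))
          = (gmu B₁ y * ∏ i, gind A (y + u i)) *
            (gmu B₂ (x + y) * ∏ i, gind A ((x + y) + u i)) := by rw [e4]; ring
        _ = ((N / B₁.card) * gind (Sfil A B₁ u) y) *
            ((N / B₂.card) * gind (Sfil A B₂ u) (x + y)) := by
              rw [mu_prod_gind, mu_prod_gind]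
        _ = (N / B₁.card) * (N / B₂.card) *
            (gind (Sfil A B₁ u) y * gind (Sfil A B₂ u) (x + y)) := by ring
    have e1 : gdconv (gmu B₁) (gmu B₂) x = (∑ y, gmu B₁ y * gmu B₂ (x + y)) / N := rfl
    rw [e1, e2, div_mul_div_comm, e3, ← pow_succ']
    ring
  calc ∑ u : Fin p → G, ∑ x, ∑ y, gind (Sfil A B₁ u) y * gind (Sfil A B₂ u) (x + y) * h x
      = ∑ x, (∑ y, ∑ u : Fin p → G, gind (Sfil A B₁ u) y * gind (Sfil A B₂ u) (x + y)) * h x := by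
        rw [Finset.sum_comm]
        refine Finset.sum_congr rfl fun x _ => ?_
        rw [Finset.sum_mul, Finset.sum_comm]
        refine Finset.sum_congr rfl fun u _ => ?_
        rw [Finset.sum_mul]
    _ = (B₁.card : ℝ) * B₂.card * N ^ (p - 1) *
        ∑ x, gdconv (gmu B₁) (gmu B₂) x * gdconv (gind A) (gind A) x ^ p * h x := by
        rw [Finset.mul_sum]
        refine Finset.sum_congr rfl fun x _ => ?_
        have hpow : N ^ (p - 1) * N ^ 2 = N ^ (p + 1) := by
          rw [← pow_add]; congr 1; omega
        have h1 : (B₁.card : ℝ) * B₂.card * N ^ (p - 1) *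
            ((N ^ (p + 1))⁻¹ * (N / B₁.card * (N / B₂.card))) = 1 := by
          field_simp
          linear_combination hpow
        rw [hx x, ← mul_assoc, h1, one_mul]

lemma sum_addLeft (f : G → ℝ) (y : G) : ∑ x, f (y + x) = ∑ x, f x :=
  Fintype.sum_equiv (Equiv.addLeft y) _ _ (fun x => rfl)

lemma sum_pi_prod {p : ℕ} (q : Fin p → G → ℝ) :
    ∑ u : Fin p → G, ∏ i, q i (u i) = ∏ i, ∑ z, q i z := by
  rw [Finset.prod_univ_sum, Fintype.piFinset_univ]

lemma sum_card_Sfil (p : ℕ) (A B : Finset G) :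
    ∑ u : Fin p → G, ((Sfil A B u).card : ℝ) = (B.card : ℝ) * (A.card : ℝ) ^ p := by
  have hcard : ∀ u : Fin p → G, ((Sfil A B u).card : ℝ)
      = ∑ y ∈ B, ∏ i, gind A (y + u i) := by
    intro u
    rw [Sfil, Finset.card_filter]
    push_cast
    exact Finset.sum_congr rfl fun y _ => by rw [prod_gind]
  calc ∑ u : Fin p → G, ((Sfil A B u).card : ℝ)
      = ∑ y ∈ B, ∑ u : Fin p → G, ∏ i, gind A (y + u i) := by
        rw [← Finset.sum_comm]; exact Finset.sum_congr rfl fun u _ => hcard u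
    _ = ∑ y ∈ B, (A.card : ℝ) ^ p := by
        refine Finset.sum_congr rfl fun y _ => ?_
        rw [sum_pi_prod (fun _ z => gind A (y + z))]
        have : ∀ i : Fin p, (∑ z, gind A (y + z)) = (A.card : ℝ) := fun _ => by
          rw [sum_addLeft, sum_gind]
        rw [Finset.prod_congr rfl (fun i _ => this i), Finset.prod_const,
          Finset.card_univ, Fintype.card_fin]
    _ = (B.card : ℝ) * (A.card : ℝ) ^ p := by
        rw [Finset.sum_const, nsmul_eq_mul]

lemma K_one (S₁ S₂ : Finset G) :
    ∑ x, ∑ y, gind S₁ y * gind S₂ (x + y) * (1:ℝ) = (S₁.card : ℝ) * S₂.card := by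
  rw [Finset.sum_comm]
  calc ∑ y, ∑ x, gind S₁ y * gind S₂ (x + y) * 1
      = ∑ y, gind S₁ y * (S₂.card : ℝ) := by
        refine Finset.sum_congr rfl fun y _ => ?_
        simp only [mul_one]
        rw [← Finset.mul_sum, sum_addRight (fun z => gind S₂ z) y, sum_gind]
    _ = (S₁.card : ℝ) * S₂.card := by rw [← Finset.sum_mul, sum_gind]



lemma gmu_eq (S : Finset G) (y : G) :
    gmu S y = ((Fintype.card G : ℝ) / S.card) * gind S y := by
  simp only [gmu, gind]
  split_ifs <;> ring

lemma gdconv_mu_eq (S₁ S₂ : Finset G) (x : G) :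
    gdconv (gmu S₁) (gmu S₂) x
      = ((Fintype.card G : ℝ) / S₁.card) * ((Fintype.card G : ℝ) / S₂.card) *
        ((∑ y, gind S₁ y * gind S₂ (x + y)) / (Fintype.card G : ℝ)) := by
  simp only [gdconv, gavg]
  rw [Finset.sum_congr rfl fun y _ => show gmu S₁ y * gmu S₂ (x + y)
      = ((Fintype.card G : ℝ) / S₁.card) * ((Fintype.card G : ℝ) / S₂.card) *
        (gind S₁ y * gind S₂ (x + y)) from by rw [gmu_eq S₁ y, gmu_eq S₂ (x + y)]; ring]
  rw [← Finset.mul_sum, mul_div_assoc]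

lemma ginner_eq (S₁ S₂ : Finset G) (f : G → ℝ) (h₁ : S₁.Nonempty) (h₂ : S₂.Nonempty) :
    ginner (gdconv (gmu S₁) (gmu S₂)) f
      = (∑ x, ∑ y, gind S₁ y * gind S₂ (x + y) * f x) / ((S₁.card : ℝ) * S₂.card) := by
  have : Nonempty G := ⟨h₁.choose⟩
  have hN : (0:ℝ) < (Fintype.card G : ℝ) := by exact_mod_cast Fintype.card_pos
  have hs₁ : ((S₁.card : ℝ)) ≠ 0 := Nat.cast_ne_zero.2 h₁.card_pos.ne'
  have hs₂ : ((S₂.card : ℝ)) ≠ 0 := Nat.cast_ne_zero.2 h₂.card_pos.ne'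
  simp only [ginner, gavg]
  rw [Finset.sum_congr rfl fun x _ => show gdconv (gmu S₁) (gmu S₂) x * f x
      = ((Fintype.card G : ℝ) / S₁.card) * ((Fintype.card G : ℝ) / S₂.card) /
          (Fintype.card G : ℝ) * (∑ y, gind S₁ y * gind S₂ (x + y) * f x) from by
        rw [gdconv_mu_eq S₁ S₂ x, ← Finset.sum_mul]; ring]
  rw [← Finset.mul_sum]
  field_simp

lemma gavg_nonneg {f : G → ℝ} (hf : ∀ x, 0 ≤ f x) : 0 ≤ gavg f :=
  div_nonneg (Finset.sum_nonneg fun x _ => hf x) (Nat.cast_nonneg _)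

lemma gdconv_nonneg {f g : G → ℝ} (hf : ∀ x, 0 ≤ f x) (hg : ∀ x, 0 ≤ g x) (x : G) :
    0 ≤ gdconv f g x := gavg_nonneg fun y => mul_nonneg (hf y) (hg (x + y))

lemma sum_gdconv_mu (B₁ B₂ : Finset G) (hB₁ : B₁.Nonempty) (hB₂ : B₂.Nonempty) :
    ∑ x, gdconv (gmu B₁) (gmu B₂) x = (Fintype.card G : ℝ) := by
  simp only [gdconv, gavg]
  rw [← Finset.sum_div, Finset.sum_comm]
  rw [Finset.sum_congr rfl fun y _ => show ∑ x, gmu B₁ y * gmu B₂ (x + y)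
      = gmu B₁ y * (Fintype.card G : ℝ) from by
        rw [← Finset.mul_sum, sum_addRight (gmu B₂) y, sum_gmu B₂ hB₂]]
  rw [← Finset.sum_mul, sum_gmu B₁ hB₁]
  have : Nonempty G := ⟨hB₁.choose⟩
  have hN : ((Fintype.card G : ℝ)) ≠ 0 := by
    exact_mod_cast Fintype.card_ne_zero
  field_simp

lemma gdconv_ind_le (A : Finset G) (x : G) :
    gdconv (gind A) (gind A) x ≤ (A.card : ℝ) / (Fintype.card G : ℝ) := by
  simp only [gdconv, gavg]
  rw [← sum_gind A]
  have hterm : ∀ s : G, gind A s * gind A (x + s) ≤ gind A s := fun s =>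
    mul_le_of_le_one_right (gind_nonneg A s) (by unfold gind; split <;> norm_num)
  rcases Nat.eq_zero_or_pos (Fintype.card G) with h0 | hpos
  · simp [h0]
  · have hc : (0:ℝ) < (Fintype.card G : ℝ) := by exact_mod_cast hpos
    exact (div_le_div_iff_of_pos_right hc).2 (Finset.sum_le_sum fun s _ => hterm s)




/-- **The dependent random choice lemma.** Let `p ≥ 2` be even, `B₁, B₂ ⊆ G` nonempty,
`μ = μ_{B₁} ∘ μ_{B₂}`, `A ⊆ G` nonempty of density `α` with `‖μ_A ∘ μ_A‖_{p(μ)} > 0`, and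
`f : G → ℝ≥0`. Then there are nonempty `A₁ ⊆ B₁`, `A₂ ⊆ B₂` with
`⟨μ_{A₁} ∘ μ_{A₂}, f⟩ ≤ 2·⟨(μ_A ∘ μ_A)^p, f⟩_μ / ‖μ_A ∘ μ_A‖_{p(μ)}^p` and
`min(μ_{B₁}(A₁), μ_{B₂}(A₂)) ≥ (1/4)·α^{2p}·‖μ_A ∘ μ_A‖_{p(μ)}^{2p}`. -/
theorem statement10 :
    ∀ (G : Type) [AddCommGroup G] [Fintype G],
      ∀ p : ℕ, Even p → 2 ≤ p →
      ∀ B₁ B₂ A : Finset G, B₁.Nonempty → B₂.Nonempty → A.Nonempty →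
      ∀ f : G → ℝ, (∀ x, 0 ≤ f x) →
      0 < gnorm (p : ℝ) (gdconv (gmu B₁) (gmu B₂)) (gdconv (gmu A) (gmu A)) →
      ∃ A₁ A₂ : Finset G, A₁ ⊆ B₁ ∧ A₂ ⊆ B₂ ∧ A₁.Nonempty ∧ A₂.Nonempty ∧
        ginner (gdconv (gmu A₁) (gmu A₂)) f ≤
          2 * gavg (fun x => gdconv (gmu B₁) (gmu B₂) x * gdconv (gmu A) (gmu A) x ^ p * f x) /
            gnorm (p : ℝ) (gdconv (gmu B₁) (gmu B₂)) (gdconv (gmu A) (gmu A)) ^ p ∧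
        (1 / 4) * gdens A ^ (2 * p) *
            gnorm (p : ℝ) (gdconv (gmu B₁) (gmu B₂)) (gdconv (gmu A) (gmu A)) ^ (2 * p) ≤
          min (grel B₁ A₁) (grel B₂ A₂) := by
  intro G _ _ p hpe hp2 B₁ B₂ A hB₁ hB₂ hA f hf hnorm
  classical
  have hGne : Nonempty G := ⟨hA.choose⟩
  have hN : (0:ℝ) < (Fintype.card G : ℝ) := by exact_mod_cast Fintype.card_pos
  set N : ℝ := (Fintype.card G : ℝ) with hNdef
  clear_value N
  have ha : (0:ℝ) < A.card := by exact_mod_cast hA.card_pos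
  have hb₁ : (0:ℝ) < B₁.card := by exact_mod_cast hB₁.card_pos
  have hb₂ : (0:ℝ) < B₂.card := by exact_mod_cast hB₂.card_pos
  have hp0 : (p:ℝ) ≠ 0 := Nat.cast_ne_zero.2 (by omega)
  have hp1 : 1 ≤ p := by omega
  set mu : G → ℝ := gdconv (gmu B₁) (gmu B₂) with hmu
  set gA : G → ℝ := gdconv (gind A) (gind A) with hgA
  set g : G → ℝ := gdconv (gmu A) (gmu A) with hg
  clear_value mu gA g
  have hmu_nn : ∀ x, 0 ≤ mu x := by
    rw [hmu]; exact fun x => gdconv_nonneg (gmu_nonneg B₁) (gmu_nonneg B₂) x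
  have hgA_nn : ∀ x, 0 ≤ gA x := by
    rw [hgA]; exact fun x => gdconv_nonneg (gind_nonneg A) (gind_nonneg A) x
  have hg_nn : ∀ x, 0 ≤ g x := by
    rw [hg]; exact fun x => gdconv_nonneg (gmu_nonneg A) (gmu_nonneg A) x
  set T : ℝ := ∑ x, mu x * gA x ^ p with hT
  set F : ℝ := ∑ x, mu x * gA x ^ p * f x with hF
  clear_value T F
  have hT_nn : 0 ≤ T := by
    rw [hT]
    exact Finset.sum_nonneg fun x _ => mul_nonneg (hmu_nn x) (pow_nonneg (hgA_nn x) p)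
  have hF_nn : 0 ≤ F := by
    rw [hF]
    exact Finset.sum_nonneg fun x _ =>
      mul_nonneg (mul_nonneg (hmu_nn x) (pow_nonneg (hgA_nn x) p)) (hf x)
  set E : ℝ := (N / A.card) ^ p with hE
  set D : ℝ := ((A.card : ℝ) / N) ^ p with hD
  clear_value E D
  have hE_pos : 0 < E := by rw [hE]; positivity
  have hD_pos : 0 < D := by rw [hD]; positivity
  have hDE : D * E = 1 := by
    rw [hD, hE, ← mul_pow, div_mul_div_comm, mul_comm (A.card : ℝ) N,
      div_self (by positivity), one_pow]
  -- relation between g and gA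
  have hgrel : ∀ x, g x = (N / A.card) ^ 2 * gA x := by
    intro x
    rw [hg, hgA]
    simp only [gdconv, gavg]
    rw [Finset.sum_congr rfl fun y _ => show gmu A y * gmu A (x + y)
        = (N / A.card) ^ 2 * (gind A y * gind A (x + y)) from by
          rw [gmu_eq, gmu_eq, ← hNdef]; ring,
      ← Finset.mul_sum, mul_div_assoc]
  set Y : ℝ := gavg (fun x => mu x * g x ^ p) with hY
  clear_value Y
  have hY_nn : 0 ≤ Y := by
    rw [hY]
    exact gavg_nonneg fun x => mul_nonneg (hmu_nn x) (pow_nonneg (hg_nn x) p)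
  have hgnorm_eq : gnorm (p:ℝ) mu g = Y ^ ((1:ℝ)/(p:ℝ)) := by
    rw [gnorm]
    congr 1
    rw [hY]
    congr 1
    funext x
    rw [abs_of_nonneg (hg_nn x), Real.rpow_natCast]
  have hgn_pow : gnorm (p:ℝ) mu g ^ p = Y := by
    rw [hgnorm_eq, ← Real.rpow_natCast (Y ^ ((1:ℝ)/(p:ℝ))) p, ← Real.rpow_mul hY_nn,
      one_div, inv_mul_cancel₀ hp0, Real.rpow_one]
  have hY_pos : 0 < Y := by
    rcases eq_or_lt_of_le hY_nn with h0 | h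
    · exfalso
      rw [hgnorm_eq, ← h0, Real.zero_rpow (one_div_ne_zero hp0)] at hnorm
      exact lt_irrefl 0 hnorm
    · exact h
  have hYT : Y = E ^ 2 * T / N := by
    rw [hY, gavg, hT]
    rw [Finset.sum_congr rfl fun x _ => show mu x * g x ^ p
        = E ^ 2 * (mu x * gA x ^ p) from by
          rw [hgrel x, mul_pow, ← pow_right_comm, ← hE]; ring]
    rw [← Finset.mul_sum, ← hNdef, mul_div_assoc]
  have hFavg : gavg (fun x => mu x * g x ^ p * f x) = E ^ 2 * F / N := by
    rw [gavg, hF]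
    rw [Finset.sum_congr rfl fun x _ => show mu x * g x ^ p * f x
        = E ^ 2 * (mu x * gA x ^ p * f x) from by
          rw [hgrel x, mul_pow, ← pow_right_comm, ← hE]; ring]
    rw [← Finset.mul_sum, ← hNdef, mul_div_assoc]
  have hT_pos : 0 < T := by
    have h1 : E ^ 2 * T = Y * N := by rw [hYT]; field_simp
    by_contra hle
    push_neg at hle
    have h2 : (0:ℝ) ≤ E ^ 2 := sq_nonneg E
    have h3 : E ^ 2 * T ≤ 0 := mul_nonpos_of_nonneg_of_nonpos h2 hle
    rw [h1] at h3
    exact absurd h3 (mul_pos hY_pos hN).not_ge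
  have hTle : T ≤ D * N := by
    have hb : ∀ x, gA x ≤ (A.card : ℝ) / N := fun x => by
      rw [hgA, hNdef]; exact gdconv_ind_le A x
    calc T = ∑ x, mu x * gA x ^ p := hT
      _ ≤ ∑ x, mu x * ((A.card : ℝ) / N) ^ p := Finset.sum_le_sum fun x _ =>
          mul_le_mul_of_nonneg_left (pow_le_pow_left₀ (hgA_nn x) (hb x) p) (hmu_nn x)
      _ = (∑ x, mu x) * D := by rw [← Finset.sum_mul, hD]
      _ = D * N := by rw [hmu, sum_gdconv_mu B₁ B₂ hB₁ hB₂, ← hNdef, mul_comm]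
  -- key identity applications
  have hkey1 : ∑ u : Fin p → G, ((Sfil A B₁ u).card : ℝ) * ((Sfil A B₂ u).card : ℝ)
      = (B₁.card : ℝ) * B₂.card * N ^ (p-1) * T := by
    have h := key_identity p hp1 B₁ B₂ A hB₁ hB₂ (fun _ => 1)
    rw [Finset.sum_congr rfl fun u (_ : u ∈ Finset.univ) =>
      K_one (Sfil A B₁ u) (Sfil A B₂ u)] at h
    simp only [mul_one] at h
    rw [← hmu, ← hgA, ← hT, ← hNdef] at h
    exact h
  have hkeyf : ∑ u : Fin p → G, (∑ x, ∑ y, gind (Sfil A B₁ u) y * gind (Sfil A B₂ u) (x + y) * f x)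
      = (B₁.card : ℝ) * B₂.card * N ^ (p-1) * F := by
    have h := key_identity p hp1 B₁ B₂ A hB₁ hB₂ f
    rw [← hmu, ← hgA, ← hF, ← hNdef] at h
    exact h
  have hKf_nn : ∀ u : Fin p → G,
      0 ≤ ∑ x, ∑ y, gind (Sfil A B₁ u) y * gind (Sfil A B₂ u) (x + y) * f x :=
    fun u => Finset.sum_nonneg fun x _ => Finset.sum_nonneg fun y _ =>
      mul_nonneg (mul_nonneg (gind_nonneg _ _) (gind_nonneg _ _)) (hf x)
  set Cst : ℝ := (B₁.card : ℝ) * B₂.card * N ^ (p-1) with hCst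
  clear_value Cst
  have hC_pos : 0 < Cst := by rw [hCst]; positivity
  set τ₁ : ℝ := Cst * T / (4 * ((B₂.card : ℝ) * (A.card : ℝ) ^ p)) with hτ₁
  set τ₂ : ℝ := Cst * T / (4 * ((B₁.card : ℝ) * (A.card : ℝ) ^ p)) with hτ₂
  clear_value τ₁ τ₂
  have hτ₁_pos : 0 < τ₁ := by rw [hτ₁]; positivity
  have hτ₂_pos : 0 < τ₂ := by rw [hτ₂]; positivity
  have hk_nn : ∀ (B : Finset G) (u : Fin p → G), (0:ℝ) ≤ ((Sfil A B u).card : ℝ) :=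
    fun B u => Nat.cast_nonneg _
  set good : Finset (Fin p → G) :=
    Finset.univ.filter (fun u => τ₁ ≤ ((Sfil A B₁ u).card : ℝ) ∧ τ₂ ≤ ((Sfil A B₂ u).card : ℝ))
    with hgood
  -- bad set bounds
  have hbad₁ : ∑ u ∈ Finset.univ.filter (fun u : Fin p → G => ¬ τ₁ ≤ ((Sfil A B₁ u).card : ℝ)),
      ((Sfil A B₁ u).card : ℝ) * ((Sfil A B₂ u).card : ℝ) ≤ Cst * T / 4 := by
    calc ∑ u ∈ Finset.univ.filter (fun u : Fin p → G => ¬ τ₁ ≤ ((Sfil A B₁ u).card : ℝ)),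
        ((Sfil A B₁ u).card : ℝ) * ((Sfil A B₂ u).card : ℝ)
        ≤ ∑ u ∈ Finset.univ.filter (fun u : Fin p → G => ¬ τ₁ ≤ ((Sfil A B₁ u).card : ℝ)),
          τ₁ * ((Sfil A B₂ u).card : ℝ) := by
          refine Finset.sum_le_sum fun u hu => ?_
          have := (Finset.mem_filter.1 hu).2
          exact mul_le_mul_of_nonneg_right (le_of_lt (not_le.1 this)) (hk_nn B₂ u)
      _ = τ₁ * ∑ u ∈ Finset.univ.filter (fun u : Fin p → G => ¬ τ₁ ≤ ((Sfil A B₁ u).card : ℝ)),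
          ((Sfil A B₂ u).card : ℝ) := by rw [Finset.mul_sum]
      _ ≤ τ₁ * ∑ u : Fin p → G, ((Sfil A B₂ u).card : ℝ) := by
          refine mul_le_mul_of_nonneg_left ?_ hτ₁_pos.le
          exact Finset.sum_le_sum_of_subset_of_nonneg (Finset.filter_subset _ _)
            (fun u _ _ => hk_nn B₂ u)
      _ = τ₁ * ((B₂.card : ℝ) * (A.card : ℝ) ^ p) := by rw [sum_card_Sfil]
      _ = Cst * T / 4 := by rw [hτ₁]; field_simp
  have hbad₂ : ∑ u ∈ Finset.univ.filter (fun u : Fin p → G => ¬ τ₂ ≤ ((Sfil A B₂ u).card : ℝ)),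
      ((Sfil A B₁ u).card : ℝ) * ((Sfil A B₂ u).card : ℝ) ≤ Cst * T / 4 := by
    calc ∑ u ∈ Finset.univ.filter (fun u : Fin p → G => ¬ τ₂ ≤ ((Sfil A B₂ u).card : ℝ)),
        ((Sfil A B₁ u).card : ℝ) * ((Sfil A B₂ u).card : ℝ)
        ≤ ∑ u ∈ Finset.univ.filter (fun u : Fin p → G => ¬ τ₂ ≤ ((Sfil A B₂ u).card : ℝ)),
          ((Sfil A B₁ u).card : ℝ) * τ₂ := by
          refine Finset.sum_le_sum fun u hu => ?_
          have := (Finset.mem_filter.1 hu).2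
          exact mul_le_mul_of_nonneg_left (le_of_lt (not_le.1 this)) (hk_nn B₁ u)
      _ = (∑ u ∈ Finset.univ.filter (fun u : Fin p → G => ¬ τ₂ ≤ ((Sfil A B₂ u).card : ℝ)),
          ((Sfil A B₁ u).card : ℝ)) * τ₂ := by rw [Finset.sum_mul]
      _ ≤ (∑ u : Fin p → G, ((Sfil A B₁ u).card : ℝ)) * τ₂ := by
          refine mul_le_mul_of_nonneg_right ?_ hτ₂_pos.le
          exact Finset.sum_le_sum_of_subset_of_nonneg (Finset.filter_subset _ _)
            (fun u _ _ => hk_nn B₁ u)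
      _ = ((B₁.card : ℝ) * (A.card : ℝ) ^ p) * τ₂ := by rw [sum_card_Sfil]
      _ = Cst * T / 4 := by rw [hτ₂]; field_simp
  have hgood_ge : Cst * T / 2 ≤ ∑ u ∈ good, ((Sfil A B₁ u).card : ℝ) * ((Sfil A B₂ u).card : ℝ) := by
    have hsplit := Finset.sum_filter_add_sum_filter_not Finset.univ
      (fun u : Fin p → G => τ₁ ≤ ((Sfil A B₁ u).card : ℝ) ∧ τ₂ ≤ ((Sfil A B₂ u).card : ℝ))
      (fun u => ((Sfil A B₁ u).card : ℝ) * ((Sfil A B₂ u).card : ℝ))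
    have hsub : Finset.univ.filter (fun u : Fin p → G =>
        ¬ (τ₁ ≤ ((Sfil A B₁ u).card : ℝ) ∧ τ₂ ≤ ((Sfil A B₂ u).card : ℝ))) ⊆
        Finset.univ.filter (fun u : Fin p → G => ¬ τ₁ ≤ ((Sfil A B₁ u).card : ℝ)) ∪
        Finset.univ.filter (fun u : Fin p → G => ¬ τ₂ ≤ ((Sfil A B₂ u).card : ℝ)) := by
      intro u hu
      simp only [Finset.mem_filter, Finset.mem_union, Finset.mem_univ, true_and] at *
      tauto
    have hun := Finset.sum_union_inter
      (s₁ := Finset.univ.filter (fun u : Fin p → G => ¬ τ₁ ≤ ((Sfil A B₁ u).card : ℝ)))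
      (s₂ := Finset.univ.filter (fun u : Fin p → G => ¬ τ₂ ≤ ((Sfil A B₂ u).card : ℝ)))
      (f := fun u => ((Sfil A B₁ u).card : ℝ) * ((Sfil A B₂ u).card : ℝ))
    have hint_nn : (0:ℝ) ≤ ∑ u ∈ (Finset.univ.filter (fun u : Fin p → G => ¬ τ₁ ≤ ((Sfil A B₁ u).card : ℝ)) ∩
        Finset.univ.filter (fun u : Fin p → G => ¬ τ₂ ≤ ((Sfil A B₂ u).card : ℝ))),
        ((Sfil A B₁ u).card : ℝ) * ((Sfil A B₂ u).card : ℝ) :=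
      Finset.sum_nonneg fun u _ => mul_nonneg (hk_nn B₁ u) (hk_nn B₂ u)
    have hnotle : ∑ u ∈ Finset.univ.filter (fun u : Fin p → G =>
        ¬ (τ₁ ≤ ((Sfil A B₁ u).card : ℝ) ∧ τ₂ ≤ ((Sfil A B₂ u).card : ℝ))),
        ((Sfil A B₁ u).card : ℝ) * ((Sfil A B₂ u).card : ℝ) ≤ Cst * T / 4 + Cst * T / 4 := by
      calc _ ≤ ∑ u ∈ (Finset.univ.filter (fun u : Fin p → G => ¬ τ₁ ≤ ((Sfil A B₁ u).card : ℝ)) ∪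
          Finset.univ.filter (fun u : Fin p → G => ¬ τ₂ ≤ ((Sfil A B₂ u).card : ℝ))),
          ((Sfil A B₁ u).card : ℝ) * ((Sfil A B₂ u).card : ℝ) :=
            Finset.sum_le_sum_of_subset_of_nonneg hsub
              (fun u _ _ => mul_nonneg (hk_nn B₁ u) (hk_nn B₂ u))
        _ ≤ Cst * T / 4 + Cst * T / 4 := by linarith [hun, hint_nn, hbad₁, hbad₂]
    rw [hgood]
    linarith [hkey1, hsplit, hnotle]
  set Q : ℝ := 2 * F / T with hQ
  clear_value Q
  have hQ_nn : 0 ≤ Q := by rw [hQ]; positivity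
  have hexists : ∃ u ∈ good,
      ginner (gdconv (gmu (Sfil A B₁ u)) (gmu (Sfil A B₂ u))) f ≤ Q := by
    by_contra hcon
    push_neg at hcon
    have hgoodne : good.Nonempty := by
      rw [← Finset.card_pos]
      by_contra hne
      have : good = ∅ := Finset.card_eq_zero.1 (by omega)
      rw [this, Finset.sum_empty] at hgood_ge
      have := div_pos (mul_pos hC_pos hT_pos) (by norm_num : (0:ℝ) < 2)
      linarith
    have hlt : ∑ u ∈ good, Q * (((Sfil A B₁ u).card : ℝ) * ((Sfil A B₂ u).card : ℝ))
        < ∑ u ∈ good, ∑ x, ∑ y, gind (Sfil A B₁ u) y * gind (Sfil A B₂ u) (x + y) * f x := by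
      refine Finset.sum_lt_sum_of_nonempty hgoodne fun u hu => ?_
      obtain ⟨hu1, hu2⟩ := (Finset.mem_filter.1 hu).2
      have hk₁p : (0:ℝ) < ((Sfil A B₁ u).card : ℝ) := lt_of_lt_of_le hτ₁_pos hu1
      have hk₂p : (0:ℝ) < ((Sfil A B₂ u).card : ℝ) := lt_of_lt_of_le hτ₂_pos hu2
      have hne₁ : (Sfil A B₁ u).Nonempty := Finset.card_pos.1 (by exact_mod_cast hk₁p)
      have hne₂ : (Sfil A B₂ u).Nonempty := Finset.card_pos.1 (by exact_mod_cast hk₂p)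
      have h2 := hcon u hu
      rw [ginner_eq (Sfil A B₁ u) (Sfil A B₂ u) f hne₁ hne₂] at h2
      exact (lt_div_iff₀ (by positivity)).1 h2
    have hsumKf : ∑ u ∈ good, ∑ x, ∑ y, gind (Sfil A B₁ u) y * gind (Sfil A B₂ u) (x + y) * f x
        ≤ Cst * F := by
      rw [← hkeyf]
      exact Finset.sum_le_sum_of_subset_of_nonneg (Finset.filter_subset _ _)
        (fun u _ _ => hKf_nn u)
    have hql : Q * (Cst * T / 2) ≤ ∑ u ∈ good, Q * (((Sfil A B₁ u).card : ℝ) * ((Sfil A B₂ u).card : ℝ)) := by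
      rw [← Finset.mul_sum]
      exact mul_le_mul_of_nonneg_left hgood_ge hQ_nn
    have hQeq : Q * (Cst * T / 2) = Cst * F := by
      rw [hQ]; field_simp
    linarith
  obtain ⟨u₀, hu₀good, hu₀⟩ := hexists
  obtain ⟨hu₀1, hu₀2⟩ := (Finset.mem_filter.1 hu₀good).2
  have hk₁p : (0:ℝ) < ((Sfil A B₁ u₀).card : ℝ) := lt_of_lt_of_le hτ₁_pos hu₀1
  have hk₂p : (0:ℝ) < ((Sfil A B₂ u₀).card : ℝ) := lt_of_lt_of_le hτ₂_pos hu₀2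
  have hne₁ : (Sfil A B₁ u₀).Nonempty := Finset.card_pos.1 (by exact_mod_cast hk₁p)
  have hne₂ : (Sfil A B₂ u₀).Nonempty := Finset.card_pos.1 (by exact_mod_cast hk₂p)
  refine ⟨Sfil A B₁ u₀, Sfil A B₂ u₀, Sfil_subset _ _ _, Sfil_subset _ _ _, hne₁, hne₂, ?_, ?_⟩
  · have hRHS : 2 * gavg (fun x => mu x * g x ^ p * f x) / gnorm (p:ℝ) mu g ^ p = Q := by
      rw [hgn_pow, hFavg, hYT, hQ]
      field_simp
    rw [hRHS]
    exact hu₀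
  · -- density bound
    have hi₁ : Sfil A B₁ u₀ ∩ B₁ = Sfil A B₁ u₀ := Finset.inter_eq_left.2 (Sfil_subset _ _ _)
    have hi₂ : Sfil A B₂ u₀ ∩ B₂ = Sfil A B₂ u₀ := Finset.inter_eq_left.2 (Sfil_subset _ _ _)
    have hgn2 : gnorm (p:ℝ) mu g ^ (2*p) = Y ^ 2 := by
      rw [mul_comm 2 p, pow_mul, hgn_pow]
    have hdens : gdens A ^ (2*p) = D ^ 2 := by
      rw [gdens, mul_comm 2 p, pow_mul, ← hNdef, ← hD]
    have hET : E * T ≤ N := by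
      calc E * T ≤ E * (D * N) := mul_le_mul_of_nonneg_left hTle hE_pos.le
        _ = (D * E) * N := by ring
        _ = N := by rw [hDE, one_mul]
    have hETN : (1/4) * D ^ 2 * Y ^ 2 ≤ E * T / (4 * N) := by
      rw [hYT]
      have expand : (1/4) * D ^ 2 * (E ^ 2 * T / N) ^ 2
          = (E * T / (4 * N)) * ((E * T) / N) * (D * E) ^ 2 := by
        field_simp
      rw [expand, hDE, one_pow, mul_one]
      have h1 : (E * T) / N ≤ 1 := (div_le_one hN).2 hET
      have h2 : 0 ≤ E * T / (4 * N) := by positivity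
      exact mul_le_of_le_one_right h2 h1
    have hEa : (A.card : ℝ) ^ p * E = N ^ p := by
      rw [hE, div_pow]
      field_simp
    have hNp : N ^ (p-1) * N = N ^ p := by
      rw [← pow_succ]
      congr 1
      omega
    have hτb₁ : τ₁ / (B₁.card : ℝ) = E * T / (4 * N) := by
      rw [hτ₁, hCst, div_div, div_eq_div_iff (by positivity) (by positivity)]
      linear_combination (4 * (B₁.card:ℝ) * B₂.card * T) * hNp -
        (4 * (B₁.card:ℝ) * B₂.card * T) * hEa
    have hτb₂ : τ₂ / (B₂.card : ℝ) = E * T / (4 * N) := by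
      rw [hτ₂, hCst, div_div, div_eq_div_iff (by positivity) (by positivity)]
      linear_combination (4 * (B₁.card:ℝ) * B₂.card * T) * hNp -
        (4 * (B₁.card:ℝ) * B₂.card * T) * hEa
    refine le_min ?_ ?_
    · calc (1/4) * gdens A ^ (2*p) * gnorm (p:ℝ) mu g ^ (2*p)
          = (1/4) * D ^ 2 * Y ^ 2 := by rw [hdens, hgn2]
        _ ≤ E * T / (4 * N) := hETN
        _ = τ₁ / (B₁.card : ℝ) := hτb₁.symm
        _ ≤ ((Sfil A B₁ u₀).card : ℝ) / (B₁.card : ℝ) := by gcongr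
        _ = grel B₁ (Sfil A B₁ u₀) := by rw [grel, hi₁]
    · calc (1/4) * gdens A ^ (2*p) * gnorm (p:ℝ) mu g ^ (2*p)
          = (1/4) * D ^ 2 * Y ^ 2 := by rw [hdens, hgn2]
        _ ≤ E * T / (4 * N) := hETN
        _ = τ₂ / (B₂.card : ℝ) := hτb₂.symm
        _ ≤ ((Sfil A B₂ u₀).card : ℝ) / (B₂.card : ℝ) := by gcongr
        _ = grel B₂ (Sfil A B₂ u₀) := by rw [grel, hi₂]
end
end

section
/- There is a constant C > 0 such that the following holds. Let G be a finite abelian group, let ε > 0, let A ⊆ G be nonempty, let γ ∈ (0,1], and let C' ⊆ G be nonempty with density at least γ. Then at least one of the following holds: (1) |⟨μ_A ∗ μ_A, μ_{C'}⟩ − 1| ≤ ε; or (2) there is an even integer p with 2 ≤ p ≤ C·log(2/γ) such that ‖μ_A ∘ μ_A − 1‖_p ≥ ε/2. -/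
open scoped Classical Pointwise

noncomputable section

variable {G : Type*} [AddCommGroup G] [Fintype G]

/-! ### Auxiliary Fourier analysis -/

private def dftc (w : G → ℂ) (ψ : AddChar G ℂ) : ℂ :=
  (∑ x, w x * ψ (-x)) / (Fintype.card G : ℂ)

private lemma sum_char_mul (x y : G) :
    ∑ ψ : AddChar G ℂ, ψ (-y) * ψ x = if x = y then (Fintype.card G : ℂ) else 0 := by
  have h : ∀ ψ : AddChar G ℂ, ψ (-y) * ψ x = ψ (x - y) := fun ψ => by
    rw [sub_eq_add_neg, AddChar.map_add_eq_mul, mul_comm]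
  simp_rw [h, AddChar.sum_apply_eq_ite, sub_eq_zero]

private lemma dftc_inversion (w : G → ℂ) (x : G) :
    ∑ ψ : AddChar G ℂ, dftc w ψ * ψ x = w x := by
  have hN : (Fintype.card G : ℂ) ≠ 0 := Nat.cast_ne_zero.2 Fintype.card_ne_zero
  calc ∑ ψ : AddChar G ℂ, dftc w ψ * ψ x
      = ∑ ψ : AddChar G ℂ, ∑ y, w y / (Fintype.card G : ℂ) * (ψ (-y) * ψ x) := by
        refine Finset.sum_congr rfl fun ψ _ => ?_
        rw [dftc, Finset.sum_div, Finset.sum_mul]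
        exact Finset.sum_congr rfl fun y _ => by ring
    _ = ∑ y, w y / (Fintype.card G : ℂ) * ∑ ψ : AddChar G ℂ, ψ (-y) * ψ x := by
        rw [Finset.sum_comm]; simp_rw [Finset.mul_sum]
    _ = w x := by
        simp_rw [sum_char_mul]
        rw [Finset.sum_eq_single x]
        · rw [if_pos rfl, div_mul_cancel₀ _ hN]
        · intro y _ hy; rw [if_neg (fun h => hy h.symm), mul_zero]
        · intro h; exact absurd (Finset.mem_univ x) h

private lemma sum_pow_eq_s11 (w : G → ℂ) (p : ℕ) :
    ∑ x, w x ^ p =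
      ∑ k : Fin p → AddChar G ℂ, (∏ i, dftc w (k i)) *
        (if ∏ i, k i = 1 then (Fintype.card G : ℂ) else 0) := by
  have h1 : ∀ x : G, w x ^ p = ∑ k : Fin p → AddChar G ℂ, ∏ i, (dftc w (k i) * (k i) x) := by
    intro x
    calc w x ^ p = ∏ _i : Fin p, w x := by simp
      _ = ∏ i : Fin p, ∑ ψ : AddChar G ℂ, dftc w ψ * ψ x :=
          Finset.prod_congr rfl fun i _ => (dftc_inversion w x).symm
      _ = ∑ k ∈ Fintype.piFinset (fun _ : Fin p => (Finset.univ : Finset (AddChar G ℂ))),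
            ∏ i, (dftc w (k i) * (k i) x) := Finset.prod_univ_sum _ _
      _ = ∑ k : Fin p → AddChar G ℂ, ∏ i, (dftc w (k i) * (k i) x) := by
          rw [Fintype.piFinset_univ]
  simp_rw [h1]
  rw [Finset.sum_comm]
  refine Finset.sum_congr rfl fun k _ => ?_
  have h2 : ∀ x : G, ∏ i, (dftc w (k i) * (k i) x)
      = (∏ i, dftc w (k i)) * (∏ i, k i : AddChar G ℂ) x := by
    intro x
    rw [Finset.prod_mul_distrib]
    congr 1
    rw [AddChar.coe_prod, Finset.prod_apply]
  simp_rw [h2, ← Finset.mul_sum]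
  congr 1
  rw [AddChar.sum_eq_ite]
  rfl

private lemma dftc_sub (w₁ w₂ : G → ℂ) (ψ : AddChar G ℂ) :
    dftc (w₁ - w₂) ψ = dftc w₁ ψ - dftc w₂ ψ := by
  simp only [dftc, Pi.sub_apply, sub_mul, Finset.sum_sub_distrib, sub_div]

private lemma dftc_one (ψ : AddChar G ℂ) :
    dftc (fun _ : G => (1 : ℂ)) ψ = if ψ = 0 then 1 else 0 := by
  have hN : (Fintype.card G : ℂ) ≠ 0 := Nat.cast_ne_zero.2 Fintype.card_ne_zero
  have h : ∀ x : G, (1 : ℂ) * ψ (-x) = ψ⁻¹ x := fun x => by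
    rw [one_mul, AddChar.inv_apply]
  rw [dftc]
  simp_rw [h]
  rw [AddChar.sum_eq_ite]
  have h0 : ψ⁻¹ = 0 ↔ ψ = 0 := by
    rw [show (0 : AddChar G ℂ) = 1 from rfl, inv_eq_one]
  rw [if_congr h0 rfl rfl]
  split_ifs
  · rw [div_self hN]
  · rw [zero_div]

private lemma dftc_conv (f : G → ℝ) (ψ : AddChar G ℂ) :
    dftc (fun x => ((gconv f f x : ℝ) : ℂ)) ψ = dftc (fun x => (f x : ℂ)) ψ ^ 2 := by
  have hN : (Fintype.card G : ℂ) ≠ 0 := Nat.cast_ne_zero.2 Fintype.card_ne_zero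
  have key : ∑ x : G, (∑ y : G, (f y : ℂ) * (f (x - y) : ℂ)) * ψ (-x)
      = (∑ y : G, (f y : ℂ) * ψ (-y)) * (∑ z : G, (f z : ℂ) * ψ (-z)) := by
    calc ∑ x : G, (∑ y : G, (f y : ℂ) * (f (x - y) : ℂ)) * ψ (-x)
        = ∑ x : G, ∑ y : G, (f y : ℂ) * (f (x - y) : ℂ) * ψ (-x) := by
          simp_rw [Finset.sum_mul]
      _ = ∑ y : G, ∑ x : G, (f y : ℂ) * (f (x - y) : ℂ) * ψ (-x) := Finset.sum_comm
      _ = ∑ y : G, (f y : ℂ) * ψ (-y) * ∑ z : G, (f z : ℂ) * ψ (-z) := by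
          refine Finset.sum_congr rfl fun y _ => ?_
          rw [Finset.mul_sum]
          refine (Fintype.sum_equiv (Equiv.addRight y) _ _ fun z => ?_).symm
          simp only [Equiv.coe_addRight, add_sub_cancel_right]
          rw [neg_add_rev, AddChar.map_add_eq_mul]
          ring
      _ = (∑ y : G, (f y : ℂ) * ψ (-y)) * (∑ z : G, (f z : ℂ) * ψ (-z)) := by
          rw [Finset.sum_mul]
  rw [dftc, dftc]
  have h2 : ∀ x : G, ((gconv f f x : ℝ) : ℂ)
      = (∑ y, (f y : ℂ) * (f (x - y) : ℂ)) / (Fintype.card G : ℂ) := by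
    intro x; rw [gconv, gavg]; push_cast; ring
  simp_rw [h2, div_mul_eq_mul_div, ← Finset.sum_div, key]
  field_simp

private lemma dftc_dconv (f : G → ℝ) (ψ : AddChar G ℂ) :
    dftc (fun x => ((gdconv f f x : ℝ) : ℂ)) ψ
      = (starRingEnd ℂ) (dftc (fun x => (f x : ℂ)) ψ) * dftc (fun x => (f x : ℂ)) ψ := by
  have hN : (Fintype.card G : ℂ) ≠ 0 := Nat.cast_ne_zero.2 Fintype.card_ne_zero
  have hconj : (starRingEnd ℂ) (dftc (fun x => (f x : ℂ)) ψ)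
      = (∑ y : G, (f y : ℂ) * ψ y) / (Fintype.card G : ℂ) := by
    rw [dftc, map_div₀, map_sum]
    congr 1
    · refine Finset.sum_congr rfl fun y _ => ?_
      rw [map_mul, Complex.conj_ofReal, ← AddChar.inv_apply_eq_conj, AddChar.map_neg_eq_inv,
        inv_inv]
    · simp
  have key : ∑ x : G, (∑ y : G, (f y : ℂ) * (f (x + y) : ℂ)) * ψ (-x)
      = (∑ y : G, (f y : ℂ) * ψ y) * (∑ z : G, (f z : ℂ) * ψ (-z)) := by
    calc ∑ x : G, (∑ y : G, (f y : ℂ) * (f (x + y) : ℂ)) * ψ (-x)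
        = ∑ x : G, ∑ y : G, (f y : ℂ) * (f (x + y) : ℂ) * ψ (-x) := by
          simp_rw [Finset.sum_mul]
      _ = ∑ y : G, ∑ x : G, (f y : ℂ) * (f (x + y) : ℂ) * ψ (-x) := Finset.sum_comm
      _ = ∑ y : G, (f y : ℂ) * ψ y * ∑ z : G, (f z : ℂ) * ψ (-z) := by
          refine Finset.sum_congr rfl fun y _ => ?_
          rw [Finset.mul_sum]
          refine (Fintype.sum_equiv (Equiv.subRight y) _ _ fun z => ?_).symm
          simp only [Equiv.subRight_apply, sub_add_cancel]
          rw [neg_sub, sub_eq_add_neg, AddChar.map_add_eq_mul]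
          ring
      _ = (∑ y : G, (f y : ℂ) * ψ y) * (∑ z : G, (f z : ℂ) * ψ (-z)) := by
          rw [Finset.sum_mul]
  rw [hconj, dftc, dftc]
  have h2 : ∀ x : G, ((gdconv f f x : ℝ) : ℂ)
      = (∑ y, (f y : ℂ) * (f (x + y) : ℂ)) / (Fintype.card G : ℂ) := by
    intro x; rw [gdconv, gavg]; push_cast; ring
  simp_rw [h2, div_mul_eq_mul_div, ← Finset.sum_div, key]
  field_simp

private lemma key_ineq (f : G → ℝ) (hf : ∑ x, f x = (Fintype.card G : ℝ)) (p : ℕ) :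
    ∑ x, (gconv f f x - 1) ^ p ≤ ∑ x, (gdconv f f x - 1) ^ p := by
  have hN : (Fintype.card G : ℂ) ≠ 0 := Nat.cast_ne_zero.2 Fintype.card_ne_zero
  set F : G → ℂ := fun x => (f x : ℂ) with hF
  set U : G → ℂ := fun x => ((gconv f f x - 1 : ℝ) : ℂ) with hUdef
  set V : G → ℂ := fun x => ((gdconv f f x - 1 : ℝ) : ℂ) with hVdef
  set b : AddChar G ℂ → ℝ :=
    fun ψ => Complex.normSq (dftc F ψ) - (if ψ = 0 then 1 else 0) with hbdef
  have hD0 : dftc F 0 = 1 := by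
    rw [dftc]
    simp only [AddChar.zero_apply, mul_one]
    rw [show ∑ x : G, F x = ((∑ x, f x : ℝ) : ℂ) by push_cast; rfl, hf]
    exact div_self hN
  have hU : ∀ ψ, dftc U ψ = dftc F ψ ^ 2 - (if ψ = 0 then 1 else 0) := by
    intro ψ
    have : U = (fun x => ((gconv f f x : ℝ) : ℂ)) - (fun _ => (1 : ℂ)) := by
      funext x; simp [hUdef]
    rw [this, dftc_sub, dftc_conv, dftc_one]
  have hV : ∀ ψ, dftc V ψ
      = (starRingEnd ℂ) (dftc F ψ) * dftc F ψ - (if ψ = 0 then 1 else 0) := by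
    intro ψ
    have : V = (fun x => ((gdconv f f x : ℝ) : ℂ)) - (fun _ => (1 : ℂ)) := by
      funext x; simp [hVdef]
    rw [this, dftc_sub, dftc_dconv, dftc_one]
  have hb : ∀ ψ, dftc V ψ = ((b ψ : ℝ) : ℂ) := by
    intro ψ
    rw [hV ψ, hbdef]
    rw [mul_comm, Complex.mul_conj]
    by_cases h : ψ = 0
    · simp only [if_pos h]; push_cast; ring
    · simp only [if_neg h]; push_cast; ring
  have ha : ∀ ψ, ‖dftc U ψ‖ = b ψ := by
    intro ψ
    by_cases h : ψ = 0
    · subst h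
      rw [hU, hD0]
      simp [hbdef, hD0]
    · simp only [hbdef]
      rw [hU, if_neg h, sub_zero, norm_pow, Complex.sq_norm, if_neg h, sub_zero]
  have hbnn : ∀ ψ, 0 ≤ b ψ := fun ψ => (ha ψ) ▸ norm_nonneg _
  have hRC : ((∑ x, (gdconv f f x - 1) ^ p : ℝ) : ℂ) = ∑ x, V x ^ p := by
    simp only [hVdef]; push_cast; rfl
  have hRS : ∑ x, V x ^ p
      = ((∑ k : Fin p → AddChar G ℂ, (∏ i, b (k i)) *
          (if ∏ i, k i = 1 then (Fintype.card G : ℝ) else 0) : ℝ) : ℂ) := by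
    rw [sum_pow_eq_s11]
    push_cast
    refine Finset.sum_congr rfl fun k _ => ?_
    congr 1
    · exact Finset.prod_congr rfl fun i _ => hb (k i)
    · split_ifs <;> simp
  have hR : ∑ x, (gdconv f f x - 1) ^ p
      = ∑ k : Fin p → AddChar G ℂ, (∏ i, b (k i)) *
          (if ∏ i, k i = 1 then (Fintype.card G : ℝ) else 0) := by
    exact_mod_cast hRC.trans hRS
  have hLC : ((∑ x, (gconv f f x - 1) ^ p : ℝ) : ℂ) = ∑ x, U x ^ p := by
    simp only [hUdef]; push_cast; rfl
  have hL1 : ∑ x, (gconv f f x - 1) ^ p ≤ ‖∑ x, U x ^ p‖ := by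
    have h' : (∑ x, (gconv f f x - 1) ^ p) = (∑ x, U x ^ p).re := by
      rw [← hLC, Complex.ofReal_re]
    rw [h']
    exact Complex.re_le_norm _
  have hL2 : ‖∑ x, U x ^ p‖
      ≤ ∑ k : Fin p → AddChar G ℂ, (∏ i, b (k i)) *
          (if ∏ i, k i = 1 then (Fintype.card G : ℝ) else 0) := by
    rw [sum_pow_eq_s11]
    refine (norm_sum_le _ _).trans_eq ?_
    refine Finset.sum_congr rfl fun k _ => ?_
    rw [norm_mul, norm_prod]
    congr 1
    · exact Finset.prod_congr rfl fun i _ => ha (k i)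
    · split_ifs <;> simp
  rw [hR]
  exact hL1.trans hL2

set_option maxHeartbeats 2000000 in
/-- **Hölder lifting.** There is `C > 0` such that for any finite abelian group `G`, `ε > 0`,
nonempty `A ⊆ G`, `γ ∈ (0,1]` and nonempty `C' ⊆ G` of density at least `γ`, either
`|⟨μ_A ∗ μ_A, μ_{C'}⟩ - 1| ≤ ε`, or `‖μ_A ∘ μ_A - 1‖_p ≥ ε/2` for some even
`2 ≤ p ≤ C·log(2/γ)`. -/
theorem statement11 :
    ∃ C > (0 : ℝ), ∀ (G : Type) [AddCommGroup G] [Fintype G], ∀ ε : ℝ, 0 < ε →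
      ∀ A : Finset G, A.Nonempty → ∀ γ : ℝ, γ ∈ Set.Ioc (0 : ℝ) 1 →
      ∀ C' : Finset G, C'.Nonempty → γ ≤ gdens C' →
      |ginner (gconv (gmu A) (gmu A)) (gmu C') - 1| ≤ ε ∨
      ∃ p : ℕ, Even p ∧ 2 ≤ p ∧ (p : ℝ) ≤ C * Real.log (2 / γ) ∧
        ε / 2 ≤ gnorm (p : ℝ) (fun _ => 1) (fun x => gdconv (gmu A) (gmu A) x - 1) := by

  classical
  refine ⟨6, by norm_num, ?_⟩
  intro G _ _ ε hε A hA γ hγ C' hC' hγC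
  obtain ⟨hγ0, hγ1⟩ := hγ
  have hN0 : 0 < ((Fintype.card G : ℕ) : ℝ) := Nat.cast_pos.2 Fintype.card_pos
  set L := Real.log (2 / γ) with hLdef
  have hlog2 : (0.6931471803 : ℝ) < Real.log 2 := Real.log_two_gt_d9
  have hlog2pos : (0 : ℝ) < Real.log 2 := by linarith
  have hL2 : Real.log 2 ≤ L := by
    apply Real.log_le_log (by norm_num)
    rw [le_div_iff₀ hγ0]; linarith
  have hLpos : 0 < L := lt_of_lt_of_le hlog2pos hL2
  set p : ℕ := 2 * ⌈L / (2 * Real.log 2)⌉₊ with hpdef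
  have hceil : (1 : ℕ) ≤ ⌈L / (2 * Real.log 2)⌉₊ :=
    Nat.one_le_ceil_iff.2 (by positivity)
  have hp2 : 2 ≤ p := by omega
  have hp0 : p ≠ 0 := by omega
  have hpeven : Even p := even_two_mul _
  have hpcast : ((p : ℕ) : ℝ) = 2 * (⌈L / (2 * Real.log 2)⌉₊ : ℝ) := by
    rw [hpdef]; push_cast; ring
  have hple : (p : ℝ) ≤ 6 * L := by
    have h1 : (⌈L / (2 * Real.log 2)⌉₊ : ℝ) < L / (2 * Real.log 2) + 1 :=
      Nat.ceil_lt_add_one (by positivity)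
    have h2 : L / (2 * Real.log 2) ≤ L := by
      rw [div_le_iff₀ (by positivity)]
      nlinarith
    have h3 : (1 : ℝ) ≤ 2 * L := by nlinarith
    rw [hpcast]
    nlinarith
  have hplow : L ≤ (p : ℝ) * Real.log 2 := by
    have h1 : L / (2 * Real.log 2) ≤ (⌈L / (2 * Real.log 2)⌉₊ : ℝ) := Nat.le_ceil _
    rw [hpcast]
    rw [div_le_iff₀ (by positivity)] at h1
    nlinarith
  have h2p : 1 / γ ≤ (2 : ℝ) ^ p := by
    have e1 : (2 : ℝ) ^ p = Real.exp ((p : ℝ) * Real.log 2) := by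
      rw [Real.exp_nat_mul, Real.exp_log (by norm_num : (0:ℝ) < 2)]
    have e2 : Real.exp L = 2 / γ := Real.exp_log (by positivity)
    have e3 : (2 : ℝ) / γ ≤ (2 : ℝ) ^ p := by
      rw [e1, ← e2]
      exact Real.exp_le_exp.2 hplow
    have e4 : 1 / γ ≤ 2 / γ := by gcongr; norm_num
    linarith
  by_cases hcase : ε / 2 ≤ gnorm (p : ℝ) (fun _ => 1)
      (fun x => gdconv (gmu A) (gmu A) x - 1)
  · exact Or.inr ⟨p, hpeven, hp2, hple, hcase⟩
  push_neg at hcase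
  left
  set f : G → ℝ := gmu A with hfdef
  have hAcard : 0 < ((A.card : ℕ) : ℝ) := Nat.cast_pos.2 (Finset.card_pos.2 hA)
  have hm0 : 0 < ((C'.card : ℕ) : ℝ) := Nat.cast_pos.2 (Finset.card_pos.2 hC')
  have hfsum : ∑ x, f x = ((Fintype.card G : ℕ) : ℝ) := by
    rw [hfdef]
    unfold gmu
    rw [Finset.sum_ite_mem, Finset.univ_inter, Finset.sum_const, nsmul_eq_mul]
    field_simp
  have hI : ginner (gconv f f) (gmu C') - 1
      = (∑ x ∈ C', (gconv f f x - 1)) / ((C'.card : ℕ) : ℝ) := by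
    have h1 : ginner (gconv f f) (gmu C')
        = (∑ x ∈ C', gconv f f x) / ((C'.card : ℕ) : ℝ) := by
      rw [ginner, gavg]
      have h : ∀ x : G, gconv f f x * gmu C' x
          = if x ∈ C' then gconv f f x * (((Fintype.card G : ℕ) : ℝ) / ((C'.card : ℕ) : ℝ))
            else 0 := by
        intro x; rw [gmu]; split_ifs <;> simp
      simp_rw [h]
      rw [Finset.sum_ite_mem, Finset.univ_inter, ← Finset.sum_mul]
      field_simp
    rw [h1, Finset.sum_sub_distrib, Finset.sum_const, nsmul_eq_mul, mul_one, sub_div,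
      div_self (ne_of_gt hm0)]
  set S := ∑ x ∈ C', |gconv f f x - 1| with hSdef
  have hSnn : 0 ≤ S := Finset.sum_nonneg fun x _ => abs_nonneg _
  have habs : |ginner (gconv f f) (gmu C') - 1| ≤ S / ((C'.card : ℕ) : ℝ) := by
    rw [hI, abs_div, abs_of_pos hm0, hSdef]
    gcongr
    exact Finset.abs_sum_le_sum_abs _ _
  have hJensen : (S / ((C'.card : ℕ) : ℝ)) ^ p
      ≤ (∑ x ∈ C', |gconv f f x - 1| ^ p) / ((C'.card : ℕ) : ℝ) := by
    obtain ⟨q, hq⟩ : ∃ q, p = q + 1 := ⟨p - 1, by omega⟩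
    have h := pow_sum_div_card_le_sum_pow (s := C')
      (f := fun x => |gconv f f x - 1|) (fun i _ => abs_nonneg _) q
    rw [← hq] at h
    calc (S / ((C'.card : ℕ) : ℝ)) ^ p
        = (S ^ p / ((C'.card : ℕ) : ℝ) ^ q) / ((C'.card : ℕ) : ℝ) := by
          rw [div_pow, hq, pow_succ]; ring
      _ ≤ (∑ x ∈ C', |gconv f f x - 1| ^ p) / ((C'.card : ℕ) : ℝ) := by gcongr
  have hsubset : (∑ x ∈ C', |gconv f f x - 1| ^ p) ≤ ∑ x, (gconv f f x - 1) ^ p := by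
    calc ∑ x ∈ C', |gconv f f x - 1| ^ p
        ≤ ∑ x ∈ Finset.univ, |gconv f f x - 1| ^ p :=
          Finset.sum_le_sum_of_subset_of_nonneg (Finset.subset_univ _)
            (fun i _ _ => pow_nonneg (abs_nonneg _) _)
      _ = ∑ x, (gconv f f x - 1) ^ p :=
          Finset.sum_congr rfl fun x _ => hpeven.pow_abs _
  have hkey := key_ineq f hfsum p
  set T := ∑ x, (gdconv f f x - 1) ^ p with hTdef
  have hTnn : 0 ≤ T := Finset.sum_nonneg fun x _ => hpeven.pow_nonneg _
  have hgav : gavg (fun x => (1 : ℝ) * |gdconv f f x - 1| ^ ((p : ℕ) : ℝ))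
      = T / ((Fintype.card G : ℕ) : ℝ) := by
    rw [gavg, hTdef]
    congr 1
    refine Finset.sum_congr rfl fun x _ => ?_
    rw [one_mul, Real.rpow_natCast, hpeven.pow_abs]
  have hTdiv : T / ((Fintype.card G : ℕ) : ℝ) < (ε / 2) ^ p := by
    have h0 : (0 : ℝ) ≤ T / ((Fintype.card G : ℕ) : ℝ) := div_nonneg hTnn hN0.le
    have hg : gnorm ((p : ℕ) : ℝ) (fun _ => 1) (fun x => gdconv f f x - 1)
        = (T / ((Fintype.card G : ℕ) : ℝ)) ^ (1 / ((p : ℕ) : ℝ)) := by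
      rw [gnorm, hgav]
    rw [hg] at hcase
    have hlt := Real.rpow_lt_rpow (Real.rpow_nonneg h0 _) hcase
      (by positivity : (0 : ℝ) < ((p : ℕ) : ℝ))
    rw [← Real.rpow_natCast (ε / 2) p]
    rwa [← Real.rpow_mul h0, one_div, inv_mul_cancel₀
      (by positivity : ((p : ℕ) : ℝ) ≠ 0), Real.rpow_one] at hlt
  have hNm : ((Fintype.card G : ℕ) : ℝ) / ((C'.card : ℕ) : ℝ) ≤ 1 / γ := by
    rw [gdens] at hγC
    rw [div_le_div_iff₀ hm0 hγ0]
    rw [le_div_iff₀ hN0] at hγC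
    nlinarith
  have hmain : |ginner (gconv f f) (gmu C') - 1| ^ p < ε ^ p := by
    calc |ginner (gconv f f) (gmu C') - 1| ^ p
        ≤ (S / ((C'.card : ℕ) : ℝ)) ^ p := pow_le_pow_left₀ (abs_nonneg _) habs p
      _ ≤ (∑ x ∈ C', |gconv f f x - 1| ^ p) / ((C'.card : ℕ) : ℝ) := hJensen
      _ ≤ (∑ x, (gconv f f x - 1) ^ p) / ((C'.card : ℕ) : ℝ) :=
          div_le_div_of_nonneg_right hsubset hm0.le
      _ ≤ T / ((C'.card : ℕ) : ℝ) := div_le_div_of_nonneg_right hkey hm0.le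
      _ = (T / ((Fintype.card G : ℕ) : ℝ))
          * (((Fintype.card G : ℕ) : ℝ) / ((C'.card : ℕ) : ℝ)) := by
          field_simp
      _ ≤ (T / ((Fintype.card G : ℕ) : ℝ)) * (1 / γ) :=
          mul_le_mul_of_nonneg_left hNm (div_nonneg hTnn hN0.le)
      _ ≤ (T / ((Fintype.card G : ℕ) : ℝ)) * (2 : ℝ) ^ p :=
          mul_le_mul_of_nonneg_left h2p (div_nonneg hTnn hN0.le)
      _ < (ε / 2) ^ p * (2 : ℝ) ^ p :=
          mul_lt_mul_of_pos_right hTdiv (by positivity)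
      _ = ε ^ p := by rw [← mul_pow]; norm_num
  by_contra hcon
  push_neg at hcon
  exact absurd hmain (not_lt.2 (pow_le_pow_left₀ hε.le hcon.le p))
end
end
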